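/- arXiv:hep-th/9707203 — 5 statements merged into one kernel-verified Lean document; each statement's English description precedes it below -/
import Mathlib

section
/- Let f and h be n×n complex matrices satisfying i(f†h − h†f) = 1 and f† h̄ − h† f̄ = 0, and suppose f is invertible. Then the matrix N = h f⁻¹ is symmetric: Nᵗ = N. -/
open Matrix

theorem kinetic_matrix_symmetric {n : ℕ}
    (f h : Matrix (Fin n) (Fin n) ℂ)
    (h1 : Complex.I • (fᴴ * h - hᴴ * f) = 1)
    (h2 : fᴴ * h.map star - hᴴ * f.map star = 0)
    (hf : IsUnit f) :
    (h * f⁻¹)ᵀ = h * f⁻¹ := by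
  have h2' : fᴴ * h.map star = hᴴ * f.map star := by
    rw [← sub_eq_zero]; exact h2
  -- conjugate entrywise to get fᵀ * h = hᵀ * f
  have key : fᵀ * h = hᵀ * f := by
    ext i j
    have := congrFun (congrFun h2' i) j
    simp only [Matrix.mul_apply, Matrix.conjTranspose_apply, Matrix.map_apply,
      Matrix.transpose_apply] at this ⊢
    have := congrArg (starRingEnd ℂ) this
    simpa [map_sum, mul_comm] using this
  have hfd : IsUnit f.det := (Matrix.isUnit_iff_isUnit_det _).mp hf
  have hftd : IsUnit fᵀ.det := by rwa [Matrix.det_transpose]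
  have hh : hᵀ = fᵀ * (h * f⁻¹) := by
    calc hᵀ = hᵀ * f * f⁻¹ := by
            rw [Matrix.mul_assoc, Matrix.mul_nonsing_inv _ hfd, Matrix.mul_one]
      _ = fᵀ * h * f⁻¹ := by rw [key]
      _ = fᵀ * (h * f⁻¹) := by rw [Matrix.mul_assoc]
  rw [Matrix.transpose_mul, Matrix.transpose_nonsing_inv, hh, ← Matrix.mul_assoc,
    Matrix.nonsing_inv_mul _ hftd, Matrix.one_mul]
end

section
/- Let f, h be n×n complex matrices satisfying i(f†h − h†f) = 1 and f†h̄ − h†f̄ = 0. Then the 2n×2n complex matrix U = (1/√2)·[[f + ih, f̄ + ih̄],[f − ih, f̄ − ih̄]] satisfies U† η U = η where η = diag(I_n, −I_n), i.e. U belongs to U(n,n). -/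
open Matrix

theorem conj_aux_unn {n : ℕ} (f h : Matrix (Fin n) (Fin n) ℂ) (c : ℂ)
    (h1 : Complex.I • (fᴴ * h - hᴴ * f) = c • 1) :
    Complex.I • ((f.map star)ᴴ * h.map star - (h.map star)ᴴ * f.map star)
      = (-(starRingEnd ℂ c)) • 1 := by
  ext i j
  have e' := congrArg (starRingEnd ℂ) (congrFun (congrFun h1 i) j)
  simp only [Matrix.smul_apply, Matrix.sub_apply, Matrix.mul_apply, Matrix.conjTranspose_apply,
    Matrix.one_apply, Matrix.map_apply, Complex.star_def, _root_.map_mul, map_sub, map_sum,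
    Complex.conj_I, Complex.conj_conj, smul_eq_mul, _root_.map_one, map_zero,
    RingHom.id_apply, mul_ite, mul_one, mul_zero, apply_ite (⇑(starRingEnd ℂ))] at e' ⊢
  split_ifs at e' ⊢ <;> linear_combination -e'

theorem conj_aux2_unn {n : ℕ} (f h : Matrix (Fin n) (Fin n) ℂ)
    (h2 : fᴴ * h.map star - hᴴ * f.map star = 0) :
    (f.map star)ᴴ * h - (h.map star)ᴴ * f = 0 := by
  ext i j
  have e' := congrArg (starRingEnd ℂ) (congrFun (congrFun h2 i) j)
  simp only [Matrix.sub_apply, Matrix.mul_apply, Matrix.conjTranspose_apply,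
    Matrix.map_apply, Matrix.zero_apply, Complex.star_def, _root_.map_mul, map_sub, map_sum,
    Complex.conj_conj, map_zero] at e' ⊢
  linear_combination e'

theorem cross_aux_unn {n : ℕ} (A B C D E : Matrix (Fin n) (Fin n) ℂ)
    (hE : Complex.I • (Aᴴ * D - Bᴴ * C) = E) :
    (A + Complex.I • B)ᴴ * (C + Complex.I • D) -
      (A - Complex.I • B)ᴴ * (C - Complex.I • D) = (2:ℂ) • E := by
  rw [← hE]
  simp only [conjTranspose_add, conjTranspose_sub, conjTranspose_smul, Complex.star_def,
    Complex.conj_I, Matrix.add_mul, Matrix.sub_mul, Matrix.mul_add, Matrix.mul_sub,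
    Matrix.smul_mul, Matrix.mul_smul]
  module

theorem embedding_matrix_in_unn {n : ℕ}
    (f h : Matrix (Fin n) (Fin n) ℂ)
    (h1 : Complex.I • (fᴴ * h - hᴴ * f) = 1)
    (h2 : fᴴ * h.map star - hᴴ * f.map star = 0) :
    (((Real.sqrt 2 : ℂ))⁻¹ •
        Matrix.fromBlocks (f + Complex.I • h) (f.map star + Complex.I • h.map star)
          (f - Complex.I • h) (f.map star - Complex.I • h.map star))ᴴ *
        Matrix.fromBlocks 1 0 0 (-1) *
        (((Real.sqrt 2 : ℂ))⁻¹ •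
          Matrix.fromBlocks (f + Complex.I • h) (f.map star + Complex.I • h.map star)
            (f - Complex.I • h) (f.map star - Complex.I • h.map star)) =
      Matrix.fromBlocks 1 0 0 (-1) := by
  have h1' : Complex.I • (fᴴ * h - hᴴ * f) = (1:ℂ) • 1 := by rw [h1, one_smul]
  have h1c := conj_aux_unn f h 1 h1'
  simp only [_root_.map_one] at h1c
  have h2c := conj_aux2_unn f h h2
  -- the four block identities
  have bTL : (f + Complex.I • h)ᴴ * (f + Complex.I • h) -
      (f - Complex.I • h)ᴴ * (f - Complex.I • h) = (2:ℂ) • (1 : Matrix (Fin n) (Fin n) ℂ) :=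
    cross_aux_unn f h f h 1 h1
  have bTR : (f + Complex.I • h)ᴴ * (f.map star + Complex.I • h.map star) -
      (f - Complex.I • h)ᴴ * (f.map star - Complex.I • h.map star)
        = (2:ℂ) • (0 : Matrix (Fin n) (Fin n) ℂ) :=
    cross_aux_unn f h (f.map star) (h.map star) 0 (by rw [h2, smul_zero])
  have bBL : (f.map star + Complex.I • h.map star)ᴴ * (f + Complex.I • h) -
      (f.map star - Complex.I • h.map star)ᴴ * (f - Complex.I • h)
        = (2:ℂ) • (0 : Matrix (Fin n) (Fin n) ℂ) :=
    cross_aux_unn (f.map star) (h.map star) f h 0 (by rw [h2c, smul_zero])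
  have bBR : (f.map star + Complex.I • h.map star)ᴴ * (f.map star + Complex.I • h.map star) -
      (f.map star - Complex.I • h.map star)ᴴ * (f.map star - Complex.I • h.map star)
        = (2:ℂ) • (-1 : Matrix (Fin n) (Fin n) ℂ) := by
    have := cross_aux_unn (f.map star) (h.map star) (f.map star) (h.map star)
      ((-1 : ℂ) • 1) h1c
    simpa [neg_smul, one_smul] using this
  have key : (Matrix.fromBlocks (f + Complex.I • h) (f.map star + Complex.I • h.map star)
      (f - Complex.I • h) (f.map star - Complex.I • h.map star))ᴴ *
      Matrix.fromBlocks 1 0 0 (-1) *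
      Matrix.fromBlocks (f + Complex.I • h) (f.map star + Complex.I • h.map star)
        (f - Complex.I • h) (f.map star - Complex.I • h.map star)
      = (2:ℂ) • Matrix.fromBlocks 1 0 0 (-1) := by
    rw [fromBlocks_conjTranspose, fromBlocks_multiply, fromBlocks_multiply]
    simp only [Matrix.mul_one, Matrix.mul_zero, Matrix.one_mul, Matrix.zero_mul,
      add_zero, zero_add, Matrix.mul_neg, Matrix.neg_mul, neg_neg]
    simp only [← sub_eq_add_neg]
    rw [bTL, bTR, bBL, bBR, ← Matrix.fromBlocks_smul]
  have hs : (star (((Real.sqrt 2 : ℝ) : ℂ))⁻¹) = (((Real.sqrt 2 : ℝ) : ℂ))⁻¹ := by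
    rw [star_inv₀, Complex.star_def, Complex.conj_ofReal]
  have hss : (((Real.sqrt 2 : ℝ) : ℂ))⁻¹ * (((Real.sqrt 2 : ℝ) : ℂ))⁻¹ * (2:ℂ) = 1 := by
    have hm : ((Real.sqrt 2 : ℝ) : ℂ) * ((Real.sqrt 2 : ℝ) : ℂ) = 2 := by
      rw [← Complex.ofReal_mul, Real.mul_self_sqrt (by norm_num : (0:ℝ) ≤ 2)]
      norm_num
    rw [← mul_inv, hm]
    norm_num
  rw [conjTranspose_smul, hs, Matrix.smul_mul, Matrix.smul_mul, Matrix.mul_smul, key,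
    smul_smul, smul_smul, hss, one_smul]
end

section
/- Let Z be a 5×5 complex antisymmetric matrix and A = Z Z̄ᵗ (i.e. A_A{}^B = Z_{AC} Z̄^{CB}). Under the infinitesimal variation δZ_{AB} = (1/2) ξ^C ε_{CABPQ} Z̄^{PQ} with arbitrary ξ ∈ ℂ⁵, the quantity S² = (1/4)(4 Tr(A²) − (Tr A)²) is invariant to first order in ξ. -/
set_option maxRecDepth 40000
set_option maxHeartbeats 4000000

open Finset

/-- The totally antisymmetric symbol on five indices. -/
noncomputable def eps5 (a b c d e : Fin 5) : ℂ :=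
  ∑ σ : Equiv.Perm (Fin 5),
    if σ 0 = a ∧ σ 1 = b ∧ σ 2 = c ∧ σ 3 = d ∧ σ 4 = e then
      ((Equiv.Perm.sign σ : ℤ) : ℂ) else 0

lemma eps5_id : eps5 0 1 2 3 4 = 1 := by
  unfold eps5
  rw [Finset.sum_eq_single (1 : Equiv.Perm (Fin 5))]
  · simp
  · intro σ _ hσ
    rw [if_neg]
    rintro ⟨h0, h1, h2, h3, h4⟩
    exact hσ (Equiv.ext fun x => by fin_cases x <;> simp_all)
  · exact fun h => absurd (Finset.mem_univ _) h

lemma eps5_swap01 (a b c d e : Fin 5) : eps5 a b c d e = -eps5 b a c d e := by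
  unfold eps5
  rw [← Finset.sum_neg_distrib]
  refine Fintype.sum_equiv (Equiv.mulRight (Equiv.swap (0 : Fin 5) 1)) _ _ fun σ => ?_
  rw [Equiv.coe_mulRight]
  have e0 : (σ * Equiv.swap (0 : Fin 5) 1) 0 = σ 1 := by
    rw [Equiv.Perm.mul_apply, show Equiv.swap (0 : Fin 5) 1 0 = 1 from by decide]
  have e1 : (σ * Equiv.swap (0 : Fin 5) 1) 1 = σ 0 := by
    rw [Equiv.Perm.mul_apply, show Equiv.swap (0 : Fin 5) 1 1 = 0 from by decide]
  have e2 : (σ * Equiv.swap (0 : Fin 5) 1) 2 = σ 2 := by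
    rw [Equiv.Perm.mul_apply, show Equiv.swap (0 : Fin 5) 1 2 = 2 from by decide]
  have e3 : (σ * Equiv.swap (0 : Fin 5) 1) 3 = σ 3 := by
    rw [Equiv.Perm.mul_apply, show Equiv.swap (0 : Fin 5) 1 3 = 3 from by decide]
  have e4 : (σ * Equiv.swap (0 : Fin 5) 1) 4 = σ 4 := by
    rw [Equiv.Perm.mul_apply, show Equiv.swap (0 : Fin 5) 1 4 = 4 from by decide]
  have hs : ((Equiv.Perm.sign (σ * Equiv.swap (0 : Fin 5) 1) : ℤ) : ℂ)
      = -((Equiv.Perm.sign σ : ℤ) : ℂ) := by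
    rw [map_mul, Equiv.Perm.sign_swap (by decide)]
    push_cast
    ring
  rw [e0, e1, e2, e3, e4, hs]
  by_cases h : σ 0 = a ∧ σ 1 = b ∧ σ 2 = c ∧ σ 3 = d ∧ σ 4 = e
  · rw [if_pos h, if_pos (by tauto), neg_neg]
  · rw [if_neg h, if_neg (by tauto), neg_zero]

lemma eps5_swap12 (a b c d e : Fin 5) : eps5 a b c d e = -eps5 a c b d e := by
  unfold eps5
  rw [← Finset.sum_neg_distrib]
  refine Fintype.sum_equiv (Equiv.mulRight (Equiv.swap (1 : Fin 5) 2)) _ _ fun σ => ?_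
  rw [Equiv.coe_mulRight]
  have e0 : (σ * Equiv.swap (1 : Fin 5) 2) 0 = σ 0 := by
    rw [Equiv.Perm.mul_apply, show Equiv.swap (1 : Fin 5) 2 0 = 0 from by decide]
  have e1 : (σ * Equiv.swap (1 : Fin 5) 2) 1 = σ 2 := by
    rw [Equiv.Perm.mul_apply, show Equiv.swap (1 : Fin 5) 2 1 = 2 from by decide]
  have e2 : (σ * Equiv.swap (1 : Fin 5) 2) 2 = σ 1 := by
    rw [Equiv.Perm.mul_apply, show Equiv.swap (1 : Fin 5) 2 2 = 1 from by decide]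
  have e3 : (σ * Equiv.swap (1 : Fin 5) 2) 3 = σ 3 := by
    rw [Equiv.Perm.mul_apply, show Equiv.swap (1 : Fin 5) 2 3 = 3 from by decide]
  have e4 : (σ * Equiv.swap (1 : Fin 5) 2) 4 = σ 4 := by
    rw [Equiv.Perm.mul_apply, show Equiv.swap (1 : Fin 5) 2 4 = 4 from by decide]
  have hs : ((Equiv.Perm.sign (σ * Equiv.swap (1 : Fin 5) 2) : ℤ) : ℂ)
      = -((Equiv.Perm.sign σ : ℤ) : ℂ) := by
    rw [map_mul, Equiv.Perm.sign_swap (by decide)]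
    push_cast
    ring
  rw [e0, e1, e2, e3, e4, hs]
  by_cases h : σ 0 = a ∧ σ 1 = b ∧ σ 2 = c ∧ σ 3 = d ∧ σ 4 = e
  · rw [if_pos h, if_pos (by tauto), neg_neg]
  · rw [if_neg h, if_neg (by tauto), neg_zero]

lemma eps5_swap23 (a b c d e : Fin 5) : eps5 a b c d e = -eps5 a b d c e := by
  unfold eps5
  rw [← Finset.sum_neg_distrib]
  refine Fintype.sum_equiv (Equiv.mulRight (Equiv.swap (2 : Fin 5) 3)) _ _ fun σ => ?_
  rw [Equiv.coe_mulRight]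
  have e0 : (σ * Equiv.swap (2 : Fin 5) 3) 0 = σ 0 := by
    rw [Equiv.Perm.mul_apply, show Equiv.swap (2 : Fin 5) 3 0 = 0 from by decide]
  have e1 : (σ * Equiv.swap (2 : Fin 5) 3) 1 = σ 1 := by
    rw [Equiv.Perm.mul_apply, show Equiv.swap (2 : Fin 5) 3 1 = 1 from by decide]
  have e2 : (σ * Equiv.swap (2 : Fin 5) 3) 2 = σ 3 := by
    rw [Equiv.Perm.mul_apply, show Equiv.swap (2 : Fin 5) 3 2 = 3 from by decide]
  have e3 : (σ * Equiv.swap (2 : Fin 5) 3) 3 = σ 2 := by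
    rw [Equiv.Perm.mul_apply, show Equiv.swap (2 : Fin 5) 3 3 = 2 from by decide]
  have e4 : (σ * Equiv.swap (2 : Fin 5) 3) 4 = σ 4 := by
    rw [Equiv.Perm.mul_apply, show Equiv.swap (2 : Fin 5) 3 4 = 4 from by decide]
  have hs : ((Equiv.Perm.sign (σ * Equiv.swap (2 : Fin 5) 3) : ℤ) : ℂ)
      = -((Equiv.Perm.sign σ : ℤ) : ℂ) := by
    rw [map_mul, Equiv.Perm.sign_swap (by decide)]
    push_cast
    ring
  rw [e0, e1, e2, e3, e4, hs]
  by_cases h : σ 0 = a ∧ σ 1 = b ∧ σ 2 = c ∧ σ 3 = d ∧ σ 4 = e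
  · rw [if_pos h, if_pos (by tauto), neg_neg]
  · rw [if_neg h, if_neg (by tauto), neg_zero]

lemma eps5_swap34 (a b c d e : Fin 5) : eps5 a b c d e = -eps5 a b c e d := by
  unfold eps5
  rw [← Finset.sum_neg_distrib]
  refine Fintype.sum_equiv (Equiv.mulRight (Equiv.swap (3 : Fin 5) 4)) _ _ fun σ => ?_
  rw [Equiv.coe_mulRight]
  have e0 : (σ * Equiv.swap (3 : Fin 5) 4) 0 = σ 0 := by
    rw [Equiv.Perm.mul_apply, show Equiv.swap (3 : Fin 5) 4 0 = 0 from by decide]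
  have e1 : (σ * Equiv.swap (3 : Fin 5) 4) 1 = σ 1 := by
    rw [Equiv.Perm.mul_apply, show Equiv.swap (3 : Fin 5) 4 1 = 1 from by decide]
  have e2 : (σ * Equiv.swap (3 : Fin 5) 4) 2 = σ 2 := by
    rw [Equiv.Perm.mul_apply, show Equiv.swap (3 : Fin 5) 4 2 = 2 from by decide]
  have e3 : (σ * Equiv.swap (3 : Fin 5) 4) 3 = σ 4 := by
    rw [Equiv.Perm.mul_apply, show Equiv.swap (3 : Fin 5) 4 3 = 4 from by decide]
  have e4 : (σ * Equiv.swap (3 : Fin 5) 4) 4 = σ 3 := by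
    rw [Equiv.Perm.mul_apply, show Equiv.swap (3 : Fin 5) 4 4 = 3 from by decide]
  have hs : ((Equiv.Perm.sign (σ * Equiv.swap (3 : Fin 5) 4) : ℤ) : ℂ)
      = -((Equiv.Perm.sign σ : ℤ) : ℂ) := by
    rw [map_mul, Equiv.Perm.sign_swap (by decide)]
    push_cast
    ring
  rw [e0, e1, e2, e3, e4, hs]
  by_cases h : σ 0 = a ∧ σ 1 = b ∧ σ 2 = c ∧ σ 3 = d ∧ σ 4 = e
  · rw [if_pos h, if_pos (by tauto), neg_neg]
  · rw [if_neg h, if_neg (by tauto), neg_zero]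

lemma eps5_v01243 : eps5 0 1 2 4 3 = -1 := by
  rw [eps5_swap34, eps5_id]; try norm_num

lemma eps5_v01324 : eps5 0 1 3 2 4 = -1 := by
  rw [eps5_swap23, eps5_id]; try norm_num

lemma eps5_v02134 : eps5 0 2 1 3 4 = -1 := by
  rw [eps5_swap12, eps5_id]; try norm_num

lemma eps5_v10234 : eps5 1 0 2 3 4 = -1 := by
  rw [eps5_swap01, eps5_id]; try norm_num

lemma eps5_v01342 : eps5 0 1 3 4 2 = 1 := by
  rw [eps5_swap34, eps5_v01324]; try norm_num

lemma eps5_v01423 : eps5 0 1 4 2 3 = 1 := by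
  rw [eps5_swap23, eps5_v01243]; try norm_num

lemma eps5_v02143 : eps5 0 2 1 4 3 = 1 := by
  rw [eps5_swap12, eps5_v01243]; try norm_num

lemma eps5_v02314 : eps5 0 2 3 1 4 = 1 := by
  rw [eps5_swap23, eps5_v02134]; try norm_num

lemma eps5_v03124 : eps5 0 3 1 2 4 = 1 := by
  rw [eps5_swap12, eps5_v01324]; try norm_num

lemma eps5_v10243 : eps5 1 0 2 4 3 = 1 := by
  rw [eps5_swap01, eps5_v01243]; try norm_num

lemma eps5_v10324 : eps5 1 0 3 2 4 = 1 := by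
  rw [eps5_swap01, eps5_v01324]; try norm_num

lemma eps5_v12034 : eps5 1 2 0 3 4 = 1 := by
  rw [eps5_swap12, eps5_v10234]; try norm_num

lemma eps5_v20134 : eps5 2 0 1 3 4 = 1 := by
  rw [eps5_swap01, eps5_v02134]; try norm_num

lemma eps5_v01432 : eps5 0 1 4 3 2 = -1 := by
  rw [eps5_swap23, eps5_v01342]; try norm_num

lemma eps5_v02341 : eps5 0 2 3 4 1 = -1 := by
  rw [eps5_swap34, eps5_v02314]; try norm_num

lemma eps5_v02413 : eps5 0 2 4 1 3 = -1 := by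
  rw [eps5_swap23, eps5_v02143]; try norm_num

lemma eps5_v03142 : eps5 0 3 1 4 2 = -1 := by
  rw [eps5_swap12, eps5_v01342]; try norm_num

lemma eps5_v03214 : eps5 0 3 2 1 4 = -1 := by
  rw [eps5_swap12, eps5_v02314]; try norm_num

lemma eps5_v04123 : eps5 0 4 1 2 3 = -1 := by
  rw [eps5_swap12, eps5_v01423]; try norm_num

lemma eps5_v10342 : eps5 1 0 3 4 2 = -1 := by
  rw [eps5_swap01, eps5_v01342]; try norm_num

lemma eps5_v10423 : eps5 1 0 4 2 3 = -1 := by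
  rw [eps5_swap01, eps5_v01423]; try norm_num

lemma eps5_v12043 : eps5 1 2 0 4 3 = -1 := by
  rw [eps5_swap12, eps5_v10243]; try norm_num

lemma eps5_v12304 : eps5 1 2 3 0 4 = -1 := by
  rw [eps5_swap23, eps5_v12034]; try norm_num

lemma eps5_v13024 : eps5 1 3 0 2 4 = -1 := by
  rw [eps5_swap12, eps5_v10324]; try norm_num

lemma eps5_v20143 : eps5 2 0 1 4 3 = -1 := by
  rw [eps5_swap01, eps5_v02143]; try norm_num

lemma eps5_v20314 : eps5 2 0 3 1 4 = -1 := by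
  rw [eps5_swap01, eps5_v02314]; try norm_num

lemma eps5_v21034 : eps5 2 1 0 3 4 = -1 := by
  rw [eps5_swap01, eps5_v12034]; try norm_num

lemma eps5_v30124 : eps5 3 0 1 2 4 = -1 := by
  rw [eps5_swap01, eps5_v03124]; try norm_num

lemma eps5_v02431 : eps5 0 2 4 3 1 = 1 := by
  rw [eps5_swap23, eps5_v02341]; try norm_num

lemma eps5_v03241 : eps5 0 3 2 4 1 = 1 := by
  rw [eps5_swap12, eps5_v02341]; try norm_num

lemma eps5_v03412 : eps5 0 3 4 1 2 = 1 := by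
  rw [eps5_swap23, eps5_v03142]; try norm_num

lemma eps5_v04132 : eps5 0 4 1 3 2 = 1 := by
  rw [eps5_swap12, eps5_v01432]; try norm_num

lemma eps5_v04213 : eps5 0 4 2 1 3 = 1 := by
  rw [eps5_swap12, eps5_v02413]; try norm_num

lemma eps5_v10432 : eps5 1 0 4 3 2 = 1 := by
  rw [eps5_swap01, eps5_v01432]; try norm_num

lemma eps5_v12340 : eps5 1 2 3 4 0 = 1 := by
  rw [eps5_swap34, eps5_v12304]; try norm_num

lemma eps5_v12403 : eps5 1 2 4 0 3 = 1 := by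
  rw [eps5_swap23, eps5_v12043]; try norm_num

lemma eps5_v13042 : eps5 1 3 0 4 2 = 1 := by
  rw [eps5_swap12, eps5_v10342]; try norm_num

lemma eps5_v13204 : eps5 1 3 2 0 4 = 1 := by
  rw [eps5_swap12, eps5_v12304]; try norm_num

lemma eps5_v14023 : eps5 1 4 0 2 3 = 1 := by
  rw [eps5_swap12, eps5_v10423]; try norm_num

lemma eps5_v20341 : eps5 2 0 3 4 1 = 1 := by
  rw [eps5_swap01, eps5_v02341]; try norm_num

lemma eps5_v20413 : eps5 2 0 4 1 3 = 1 := by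
  rw [eps5_swap01, eps5_v02413]; try norm_num

lemma eps5_v21043 : eps5 2 1 0 4 3 = 1 := by
  rw [eps5_swap01, eps5_v12043]; try norm_num

lemma eps5_v21304 : eps5 2 1 3 0 4 = 1 := by
  rw [eps5_swap01, eps5_v12304]; try norm_num

lemma eps5_v23014 : eps5 2 3 0 1 4 = 1 := by
  rw [eps5_swap12, eps5_v20314]; try norm_num

lemma eps5_v30142 : eps5 3 0 1 4 2 = 1 := by
  rw [eps5_swap01, eps5_v03142]; try norm_num

lemma eps5_v30214 : eps5 3 0 2 1 4 = 1 := by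
  rw [eps5_swap01, eps5_v03214]; try norm_num

lemma eps5_v31024 : eps5 3 1 0 2 4 = 1 := by
  rw [eps5_swap01, eps5_v13024]; try norm_num

lemma eps5_v40123 : eps5 4 0 1 2 3 = 1 := by
  rw [eps5_swap01, eps5_v04123]; try norm_num

lemma eps5_v03421 : eps5 0 3 4 2 1 = -1 := by
  rw [eps5_swap23, eps5_v03241]; try norm_num

lemma eps5_v04231 : eps5 0 4 2 3 1 = -1 := by
  rw [eps5_swap12, eps5_v02431]; try norm_num

lemma eps5_v04312 : eps5 0 4 3 1 2 = -1 := by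
  rw [eps5_swap12, eps5_v03412]; try norm_num

lemma eps5_v12430 : eps5 1 2 4 3 0 = -1 := by
  rw [eps5_swap23, eps5_v12340]; try norm_num

lemma eps5_v13240 : eps5 1 3 2 4 0 = -1 := by
  rw [eps5_swap12, eps5_v12340]; try norm_num

lemma eps5_v13402 : eps5 1 3 4 0 2 = -1 := by
  rw [eps5_swap23, eps5_v13042]; try norm_num

lemma eps5_v14032 : eps5 1 4 0 3 2 = -1 := by
  rw [eps5_swap12, eps5_v10432]; try norm_num

lemma eps5_v14203 : eps5 1 4 2 0 3 = -1 := by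
  rw [eps5_swap12, eps5_v12403]; try norm_num

lemma eps5_v20431 : eps5 2 0 4 3 1 = -1 := by
  rw [eps5_swap01, eps5_v02431]; try norm_num

lemma eps5_v21340 : eps5 2 1 3 4 0 = -1 := by
  rw [eps5_swap01, eps5_v12340]; try norm_num

lemma eps5_v21403 : eps5 2 1 4 0 3 = -1 := by
  rw [eps5_swap01, eps5_v12403]; try norm_num

lemma eps5_v23041 : eps5 2 3 0 4 1 = -1 := by
  rw [eps5_swap12, eps5_v20341]; try norm_num

lemma eps5_v23104 : eps5 2 3 1 0 4 = -1 := by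
  rw [eps5_swap12, eps5_v21304]; try norm_num

lemma eps5_v24013 : eps5 2 4 0 1 3 = -1 := by
  rw [eps5_swap12, eps5_v20413]; try norm_num

lemma eps5_v30241 : eps5 3 0 2 4 1 = -1 := by
  rw [eps5_swap01, eps5_v03241]; try norm_num

lemma eps5_v30412 : eps5 3 0 4 1 2 = -1 := by
  rw [eps5_swap01, eps5_v03412]; try norm_num

lemma eps5_v31042 : eps5 3 1 0 4 2 = -1 := by
  rw [eps5_swap01, eps5_v13042]; try norm_num

lemma eps5_v31204 : eps5 3 1 2 0 4 = -1 := by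
  rw [eps5_swap01, eps5_v13204]; try norm_num

lemma eps5_v32014 : eps5 3 2 0 1 4 = -1 := by
  rw [eps5_swap01, eps5_v23014]; try norm_num

lemma eps5_v40132 : eps5 4 0 1 3 2 = -1 := by
  rw [eps5_swap01, eps5_v04132]; try norm_num

lemma eps5_v40213 : eps5 4 0 2 1 3 = -1 := by
  rw [eps5_swap01, eps5_v04213]; try norm_num

lemma eps5_v41023 : eps5 4 1 0 2 3 = -1 := by
  rw [eps5_swap01, eps5_v14023]; try norm_num

lemma eps5_v04321 : eps5 0 4 3 2 1 = 1 := by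
  rw [eps5_swap12, eps5_v03421]; try norm_num

lemma eps5_v13420 : eps5 1 3 4 2 0 = 1 := by
  rw [eps5_swap23, eps5_v13240]; try norm_num

lemma eps5_v14230 : eps5 1 4 2 3 0 = 1 := by
  rw [eps5_swap12, eps5_v12430]; try norm_num

lemma eps5_v14302 : eps5 1 4 3 0 2 = 1 := by
  rw [eps5_swap12, eps5_v13402]; try norm_num

lemma eps5_v21430 : eps5 2 1 4 3 0 = 1 := by
  rw [eps5_swap01, eps5_v12430]; try norm_num

lemma eps5_v23140 : eps5 2 3 1 4 0 = 1 := by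
  rw [eps5_swap12, eps5_v21340]; try norm_num

lemma eps5_v23401 : eps5 2 3 4 0 1 = 1 := by
  rw [eps5_swap23, eps5_v23041]; try norm_num

lemma eps5_v24031 : eps5 2 4 0 3 1 = 1 := by
  rw [eps5_swap12, eps5_v20431]; try norm_num

lemma eps5_v24103 : eps5 2 4 1 0 3 = 1 := by
  rw [eps5_swap12, eps5_v21403]; try norm_num

lemma eps5_v30421 : eps5 3 0 4 2 1 = 1 := by
  rw [eps5_swap01, eps5_v03421]; try norm_num

lemma eps5_v31240 : eps5 3 1 2 4 0 = 1 := by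
  rw [eps5_swap01, eps5_v13240]; try norm_num

lemma eps5_v31402 : eps5 3 1 4 0 2 = 1 := by
  rw [eps5_swap01, eps5_v13402]; try norm_num

lemma eps5_v32041 : eps5 3 2 0 4 1 = 1 := by
  rw [eps5_swap01, eps5_v23041]; try norm_num

lemma eps5_v32104 : eps5 3 2 1 0 4 = 1 := by
  rw [eps5_swap01, eps5_v23104]; try norm_num

lemma eps5_v34012 : eps5 3 4 0 1 2 = 1 := by
  rw [eps5_swap12, eps5_v30412]; try norm_num

lemma eps5_v40231 : eps5 4 0 2 3 1 = 1 := by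
  rw [eps5_swap01, eps5_v04231]; try norm_num

lemma eps5_v40312 : eps5 4 0 3 1 2 = 1 := by
  rw [eps5_swap01, eps5_v04312]; try norm_num

lemma eps5_v41032 : eps5 4 1 0 3 2 = 1 := by
  rw [eps5_swap01, eps5_v14032]; try norm_num

lemma eps5_v41203 : eps5 4 1 2 0 3 = 1 := by
  rw [eps5_swap01, eps5_v14203]; try norm_num

lemma eps5_v42013 : eps5 4 2 0 1 3 = 1 := by
  rw [eps5_swap01, eps5_v24013]; try norm_num

lemma eps5_v14320 : eps5 1 4 3 2 0 = -1 := by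
  rw [eps5_swap12, eps5_v13420]; try norm_num

lemma eps5_v23410 : eps5 2 3 4 1 0 = -1 := by
  rw [eps5_swap23, eps5_v23140]; try norm_num

lemma eps5_v24130 : eps5 2 4 1 3 0 = -1 := by
  rw [eps5_swap12, eps5_v21430]; try norm_num

lemma eps5_v24301 : eps5 2 4 3 0 1 = -1 := by
  rw [eps5_swap12, eps5_v23401]; try norm_num

lemma eps5_v31420 : eps5 3 1 4 2 0 = -1 := by
  rw [eps5_swap01, eps5_v13420]; try norm_num

lemma eps5_v32140 : eps5 3 2 1 4 0 = -1 := by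
  rw [eps5_swap01, eps5_v23140]; try norm_num

lemma eps5_v32401 : eps5 3 2 4 0 1 = -1 := by
  rw [eps5_swap01, eps5_v23401]; try norm_num

lemma eps5_v34021 : eps5 3 4 0 2 1 = -1 := by
  rw [eps5_swap12, eps5_v30421]; try norm_num

lemma eps5_v34102 : eps5 3 4 1 0 2 = -1 := by
  rw [eps5_swap12, eps5_v31402]; try norm_num

lemma eps5_v40321 : eps5 4 0 3 2 1 = -1 := by
  rw [eps5_swap01, eps5_v04321]; try norm_num

lemma eps5_v41230 : eps5 4 1 2 3 0 = -1 := by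
  rw [eps5_swap01, eps5_v14230]; try norm_num

lemma eps5_v41302 : eps5 4 1 3 0 2 = -1 := by
  rw [eps5_swap01, eps5_v14302]; try norm_num

lemma eps5_v42031 : eps5 4 2 0 3 1 = -1 := by
  rw [eps5_swap01, eps5_v24031]; try norm_num

lemma eps5_v42103 : eps5 4 2 1 0 3 = -1 := by
  rw [eps5_swap01, eps5_v24103]; try norm_num

lemma eps5_v43012 : eps5 4 3 0 1 2 = -1 := by
  rw [eps5_swap01, eps5_v34012]; try norm_num

lemma eps5_v24310 : eps5 2 4 3 1 0 = 1 := by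
  rw [eps5_swap12, eps5_v23410]; try norm_num

lemma eps5_v32410 : eps5 3 2 4 1 0 = 1 := by
  rw [eps5_swap01, eps5_v23410]; try norm_num

lemma eps5_v34120 : eps5 3 4 1 2 0 = 1 := by
  rw [eps5_swap12, eps5_v31420]; try norm_num

lemma eps5_v34201 : eps5 3 4 2 0 1 = 1 := by
  rw [eps5_swap12, eps5_v32401]; try norm_num

lemma eps5_v41320 : eps5 4 1 3 2 0 = 1 := by
  rw [eps5_swap01, eps5_v14320]; try norm_num

lemma eps5_v42130 : eps5 4 2 1 3 0 = 1 := by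
  rw [eps5_swap01, eps5_v24130]; try norm_num

lemma eps5_v42301 : eps5 4 2 3 0 1 = 1 := by
  rw [eps5_swap01, eps5_v24301]; try norm_num

lemma eps5_v43021 : eps5 4 3 0 2 1 = 1 := by
  rw [eps5_swap01, eps5_v34021]; try norm_num

lemma eps5_v43102 : eps5 4 3 1 0 2 = 1 := by
  rw [eps5_swap01, eps5_v34102]; try norm_num

lemma eps5_v34210 : eps5 3 4 2 1 0 = -1 := by
  rw [eps5_swap12, eps5_v32410]; try norm_num

lemma eps5_v42310 : eps5 4 2 3 1 0 = -1 := by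
  rw [eps5_swap01, eps5_v24310]; try norm_num

lemma eps5_v43120 : eps5 4 3 1 2 0 = -1 := by
  rw [eps5_swap01, eps5_v34120]; try norm_num

lemma eps5_v43201 : eps5 4 3 2 0 1 = -1 := by
  rw [eps5_swap01, eps5_v34201]; try norm_num

lemma eps5_v43210 : eps5 4 3 2 1 0 = 1 := by
  rw [eps5_swap01, eps5_v34210]; try norm_num

lemma eps5_zero_01 (a c d e : Fin 5) : eps5 a a c d e = 0 := by
  refine Finset.sum_eq_zero fun σ _ => if_neg ?_
  rintro ⟨h0, h1, h2, h3, h4⟩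
  exact absurd (σ.injective (h0.trans h1.symm)) (by decide)

lemma eps5_zero_02 (a b d e : Fin 5) : eps5 a b a d e = 0 := by
  refine Finset.sum_eq_zero fun σ _ => if_neg ?_
  rintro ⟨h0, h1, h2, h3, h4⟩
  exact absurd (σ.injective (h0.trans h2.symm)) (by decide)

lemma eps5_zero_03 (a b c e : Fin 5) : eps5 a b c a e = 0 := by
  refine Finset.sum_eq_zero fun σ _ => if_neg ?_
  rintro ⟨h0, h1, h2, h3, h4⟩
  exact absurd (σ.injective (h0.trans h3.symm)) (by decide)

lemma eps5_zero_04 (a b c d : Fin 5) : eps5 a b c d a = 0 := by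
  refine Finset.sum_eq_zero fun σ _ => if_neg ?_
  rintro ⟨h0, h1, h2, h3, h4⟩
  exact absurd (σ.injective (h0.trans h4.symm)) (by decide)

lemma eps5_zero_12 (a b d e : Fin 5) : eps5 a b b d e = 0 := by
  refine Finset.sum_eq_zero fun σ _ => if_neg ?_
  rintro ⟨h0, h1, h2, h3, h4⟩
  exact absurd (σ.injective (h1.trans h2.symm)) (by decide)

lemma eps5_zero_13 (a b c e : Fin 5) : eps5 a b c b e = 0 := by
  refine Finset.sum_eq_zero fun σ _ => if_neg ?_
  rintro ⟨h0, h1, h2, h3, h4⟩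
  exact absurd (σ.injective (h1.trans h3.symm)) (by decide)

lemma eps5_zero_14 (a b c d : Fin 5) : eps5 a b c d b = 0 := by
  refine Finset.sum_eq_zero fun σ _ => if_neg ?_
  rintro ⟨h0, h1, h2, h3, h4⟩
  exact absurd (σ.injective (h1.trans h4.symm)) (by decide)

lemma eps5_zero_23 (a b c e : Fin 5) : eps5 a b c c e = 0 := by
  refine Finset.sum_eq_zero fun σ _ => if_neg ?_
  rintro ⟨h0, h1, h2, h3, h4⟩
  exact absurd (σ.injective (h2.trans h3.symm)) (by decide)

lemma eps5_zero_24 (a b c d : Fin 5) : eps5 a b c d c = 0 := by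
  refine Finset.sum_eq_zero fun σ _ => if_neg ?_
  rintro ⟨h0, h1, h2, h3, h4⟩
  exact absurd (σ.injective (h2.trans h4.symm)) (by decide)

lemma eps5_zero_34 (a b c d : Fin 5) : eps5 a b c d d = 0 := by
  refine Finset.sum_eq_zero fun σ _ => if_neg ?_
  rintro ⟨h0, h1, h2, h3, h4⟩
  exact absurd (σ.injective (h3.trans h4.symm)) (by decide)

noncomputable def dzm (Z : Fin 5 → Fin 5 → ℂ) (ξ : Fin 5 → ℂ) : Fin 5 → Fin 5 → ℂ :=
  ![![0, (1 / 2 : ℂ) * (ξ 2 * star (Z 3 4) + -(ξ 2 * star (Z 4 3)) + -(ξ 3 * star (Z 2 4)) + ξ 3 * star (Z 4 2) + ξ 4 * star (Z 2 3) + -(ξ 4 * star (Z 3 2))), (1 / 2 : ℂ) * (-(ξ 1 * star (Z 3 4)) + ξ 1 * star (Z 4 3) + ξ 3 * star (Z 1 4) + -(ξ 3 * star (Z 4 1)) + -(ξ 4 * star (Z 1 3)) + ξ 4 * star (Z 3 1)), (1 / 2 : ℂ) * (ξ 1 * star (Z 2 4) + -(ξ 1 * star (Z 4 2)) + -(ξ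 2 * star (Z 1 4)) + ξ 2 * star (Z 4 1) + ξ 4 * star (Z 1 2) + -(ξ 4 * star (Z 2 1))), (1 / 2 : ℂ) * (-(ξ 1 * star (Z 2 3)) + ξ 1 * star (Z 3 2) + ξ 2 * star (Z 1 3) + -(ξ 2 * star (Z 3 1)) + -(ξ 3 * star (Z 1 2)) + ξ 3 * star (Z 2 1))],
    ![(1 / 2 : ℂ) * (-(ξ 2 * star (Z 3 4)) + ξ 2 * star (Z 4 3) + ξ 3 * star (Z 2 4) + -(ξ 3 * star (Z 4 2)) + -(ξ 4 * star (Z 2 3)) + ξ 4 * star (Z 3 2)), 0, (1 / 2 : ℂ) * (ξ 0 * star (Z 3 4) + -(ξ 0 * star (Z 4 3)) + -(ξ 3 * star (Z 0 4)) + ξ 3 * star (Z 4 0) + ξ 4 * star (Z 0 3) + -(ξ 4 * star (Z 3 0))), (1 / 2 : ℂ) * (-(ξ 0 * star (Z 2 4)) + ξ 0 * star (Z 4 2) + ξ 2 * star (Z 0 4) + -(ξ 2 * star (Z 4 0)) + -(ξ 4 * star (Z 0 2)) + ξ 4 * star (Z 2 0)), (1 / 2 : ℂ) * (ξ 0 *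 star (Z 2 3) + -(ξ 0 * star (Z 3 2)) + -(ξ 2 * star (Z 0 3)) + ξ 2 * star (Z 3 0) + ξ 3 * star (Z 0 2) + -(ξ 3 * star (Z 2 0)))],
    ![(1 / 2 : ℂ) * (ξ 1 * star (Z 3 4) + -(ξ 1 * star (Z 4 3)) + -(ξ 3 * star (Z 1 4)) + ξ 3 * star (Z 4 1) + ξ 4 * star (Z 1 3) + -(ξ 4 * star (Z 3 1))), (1 / 2 : ℂ) * (-(ξ 0 * star (Z 3 4)) + ξ 0 * star (Z 4 3) + ξ 3 * star (Z 0 4) + -(ξ 3 * star (Z 4 0)) + -(ξ 4 * star (Z 0 3)) + ξ 4 * star (Z 3 0)), 0, (1 / 2 : ℂ) * (ξ 0 * star (Z 1 4) + -(ξ 0 * star (Z 4 1)) + -(ξ 1 * star (Z 0 4)) + ξ 1 * star (Z 4 0) + ξ 4 * star (Z 0 1) + -(ξ 4 * star (Z 1 0))), (1 / 2 : ℂ) * (-(ξ 0 * star (Z 1 3)) + ξ 0 * star (Z 3 1) + ξ 1 * star (Z 0 3) + -(ξ 1 * star (Z 3 0)) + -(ξ 3 * star (Z 0 1)) + ξ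 3 * star (Z 1 0))],
    ![(1 / 2 : ℂ) * (-(ξ 1 * star (Z 2 4)) + ξ 1 * star (Z 4 2) + ξ 2 * star (Z 1 4) + -(ξ 2 * star (Z 4 1)) + -(ξ 4 * star (Z 1 2)) + ξ 4 * star (Z 2 1)), (1 / 2 : ℂ) * (ξ 0 * star (Z 2 4) + -(ξ 0 * star (Z 4 2)) + -(ξ 2 * star (Z 0 4)) + ξ 2 * star (Z 4 0) + ξ 4 * star (Z 0 2) + -(ξ 4 * star (Z 2 0))), (1 / 2 : ℂ) * (-(ξ 0 * star (Z 1 4)) + ξ 0 * star (Z 4 1) + ξ 1 * star (Z 0 4) + -(ξ 1 * star (Z 4 0)) + -(ξ 4 * star (Z 0 1)) + ξ 4 * star (Z 1 0)), 0, (1 / 2 : ℂ) * (ξ 0 * star (Z 1 2) + -(ξ 0 * star (Z 2 1)) + -(ξ 1 * star (Z 0 2)) + ξ 1 * star (Z 2 0) + ξ 2 * star (Z 0 1) + -(ξ 2 * star (Z 1 0)))],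
    ![(1 / 2 : ℂ) * (ξ 1 * star (Z 2 3) + -(ξ 1 * star (Z 3 2)) + -(ξ 2 * star (Z 1 3)) + ξ 2 * star (Z 3 1) + ξ 3 * star (Z 1 2) + -(ξ 3 * star (Z 2 1))), (1 / 2 : ℂ) * (-(ξ 0 * star (Z 2 3)) + ξ 0 * star (Z 3 2) + ξ 2 * star (Z 0 3) + -(ξ 2 * star (Z 3 0)) + -(ξ 3 * star (Z 0 2)) + ξ 3 * star (Z 2 0)), (1 / 2 : ℂ) * (ξ 0 * star (Z 1 3) + -(ξ 0 * star (Z 3 1)) + -(ξ 1 * star (Z 0 3)) + ξ 1 * star (Z 3 0) + ξ 3 * star (Z 0 1) + -(ξ 3 * star (Z 1 0))), (1 / 2 : ℂ) * (-(ξ 0 * star (Z 1 2)) + ξ 0 * star (Z 2 1) + ξ 1 * star (Z 0 2) + -(ξ 1 * star (Z 2 0)) + -(ξ 2 * star (Z 0 1)) + ξ 2 * star (Z 1 0)), 0]]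

lemma hdzm00 (Z : Fin 5 → Fin 5 → ℂ) (ξ : Fin 5 → ℂ) :
    (1 / 2 : ℂ) * ∑ C, ξ C * ∑ P, ∑ Q, eps5 C 0 0 P Q * star (Z P Q) = 0 := by
  simp only [Fin.sum_univ_five, eps5_zero_01, eps5_zero_02, eps5_zero_03, eps5_zero_04, eps5_zero_12, eps5_zero_13, eps5_zero_14, eps5_zero_23, eps5_zero_24, eps5_zero_34]
  ring

lemma hdzm01 (Z : Fin 5 → Fin 5 → ℂ) (ξ : Fin 5 → ℂ) :
    (1 / 2 : ℂ) * ∑ C, ξ C * ∑ P, ∑ Q, eps5 C 0 1 P Q * star (Z P Q) = (1 / 2 : ℂ) * (ξ 2 * star (Z 3 4) + -(ξ 2 * star (Z 4 3)) + -(ξ 3 * star (Z 2 4)) + ξ 3 * star (Z 4 2) + ξ 4 * star (Z 2 3) + -(ξ 4 * star (Z 3 2))) := by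
  simp only [Fin.sum_univ_five, eps5_zero_01, eps5_zero_02, eps5_zero_03, eps5_zero_04, eps5_zero_12, eps5_zero_13, eps5_zero_14, eps5_zero_23, eps5_zero_24, eps5_zero_34, eps5_v20134, eps5_v20143, eps5_v30124, eps5_v30142, eps5_v40123, eps5_v40132]
  ring

lemma hdzm02 (Z : Fin 5 → Fin 5 → ℂ) (ξ : Fin 5 → ℂ) :
    (1 / 2 : ℂ) * ∑ C, ξ C * ∑ P, ∑ Q, eps5 C 0 2 P Q * star (Z P Q) = (1 / 2 : ℂ) * (-(ξ 1 * star (Z 3 4)) + ξ 1 * star (Z 4 3) + ξ 3 * star (Z 1 4) + -(ξ 3 * star (Z 4 1)) + -(ξ 4 * star (Z 1 3)) + ξ 4 * star (Z 3 1)) := by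
  simp only [Fin.sum_univ_five, eps5_zero_01, eps5_zero_02, eps5_zero_03, eps5_zero_04, eps5_zero_12, eps5_zero_13, eps5_zero_14, eps5_zero_23, eps5_zero_24, eps5_zero_34, eps5_v10234, eps5_v10243, eps5_v30214, eps5_v30241, eps5_v40213, eps5_v40231]
  ring

lemma hdzm03 (Z : Fin 5 → Fin 5 → ℂ) (ξ : Fin 5 → ℂ) :
    (1 / 2 : ℂ) * ∑ C, ξ C * ∑ P, ∑ Q, eps5 C 0 3 P Q * star (Z P Q) = (1 / 2 : ℂ) * (ξ 1 * star (Z 2 4) + -(ξ 1 * star (Z 4 2)) + -(ξ 2 * star (Z 1 4)) + ξ 2 * star (Z 4 1) + ξ 4 * star (Z 1 2) + -(ξ 4 * star (Z 2 1))) := by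
  simp only [Fin.sum_univ_five, eps5_zero_01, eps5_zero_02, eps5_zero_03, eps5_zero_04, eps5_zero_12, eps5_zero_13, eps5_zero_14, eps5_zero_23, eps5_zero_24, eps5_zero_34, eps5_v10324, eps5_v10342, eps5_v20314, eps5_v20341, eps5_v40312, eps5_v40321]
  ring

lemma hdzm04 (Z : Fin 5 → Fin 5 → ℂ) (ξ : Fin 5 → ℂ) :
    (1 / 2 : ℂ) * ∑ C, ξ C * ∑ P, ∑ Q, eps5 C 0 4 P Q * star (Z P Q) = (1 / 2 : ℂ) * (-(ξ 1 * star (Z 2 3)) + ξ 1 * star (Z 3 2) + ξ 2 * star (Z 1 3) + -(ξ 2 * star (Z 3 1)) + -(ξ 3 * star (Z 1 2)) + ξ 3 * star (Z 2 1)) := by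
  simp only [Fin.sum_univ_five, eps5_zero_01, eps5_zero_02, eps5_zero_03, eps5_zero_04, eps5_zero_12, eps5_zero_13, eps5_zero_14, eps5_zero_23, eps5_zero_24, eps5_zero_34, eps5_v10423, eps5_v10432, eps5_v20413, eps5_v20431, eps5_v30412, eps5_v30421]
  ring

lemma hdzm10 (Z : Fin 5 → Fin 5 → ℂ) (ξ : Fin 5 → ℂ) :
    (1 / 2 : ℂ) * ∑ C, ξ C * ∑ P, ∑ Q, eps5 C 1 0 P Q * star (Z P Q) = (1 / 2 : ℂ) * (-(ξ 2 * star (Z 3 4)) + ξ 2 * star (Z 4 3) + ξ 3 * star (Z 2 4) + -(ξ 3 * star (Z 4 2)) + -(ξ 4 * star (Z 2 3)) + ξ 4 * star (Z 3 2)) := by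
  simp only [Fin.sum_univ_five, eps5_zero_01, eps5_zero_02, eps5_zero_03, eps5_zero_04, eps5_zero_12, eps5_zero_13, eps5_zero_14, eps5_zero_23, eps5_zero_24, eps5_zero_34, eps5_v21034, eps5_v21043, eps5_v31024, eps5_v31042, eps5_v41023, eps5_v41032]
  ring

lemma hdzm11 (Z : Fin 5 → Fin 5 → ℂ) (ξ : Fin 5 → ℂ) :
    (1 / 2 : ℂ) * ∑ C, ξ C * ∑ P, ∑ Q, eps5 C 1 1 P Q * star (Z P Q) = 0 := by
  simp only [Fin.sum_univ_five, eps5_zero_01, eps5_zero_02, eps5_zero_03, eps5_zero_04, eps5_zero_12, eps5_zero_13, eps5_zero_14, eps5_zero_23, eps5_zero_24, eps5_zero_34]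
  ring

lemma hdzm12 (Z : Fin 5 → Fin 5 → ℂ) (ξ : Fin 5 → ℂ) :
    (1 / 2 : ℂ) * ∑ C, ξ C * ∑ P, ∑ Q, eps5 C 1 2 P Q * star (Z P Q) = (1 / 2 : ℂ) * (ξ 0 * star (Z 3 4) + -(ξ 0 * star (Z 4 3)) + -(ξ 3 * star (Z 0 4)) + ξ 3 * star (Z 4 0) + ξ 4 * star (Z 0 3) + -(ξ 4 * star (Z 3 0))) := by
  simp only [Fin.sum_univ_five, eps5_zero_01, eps5_zero_02, eps5_zero_03, eps5_zero_04, eps5_zero_12, eps5_zero_13, eps5_zero_14, eps5_zero_23, eps5_zero_24, eps5_zero_34, eps5_id, eps5_v01243, eps5_v31204, eps5_v31240, eps5_v41203, eps5_v41230]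
  ring

lemma hdzm13 (Z : Fin 5 → Fin 5 → ℂ) (ξ : Fin 5 → ℂ) :
    (1 / 2 : ℂ) * ∑ C, ξ C * ∑ P, ∑ Q, eps5 C 1 3 P Q * star (Z P Q) = (1 / 2 : ℂ) * (-(ξ 0 * star (Z 2 4)) + ξ 0 * star (Z 4 2) + ξ 2 * star (Z 0 4) + -(ξ 2 * star (Z 4 0)) + -(ξ 4 * star (Z 0 2)) + ξ 4 * star (Z 2 0)) := by
  simp only [Fin.sum_univ_five, eps5_zero_01, eps5_zero_02, eps5_zero_03, eps5_zero_04, eps5_zero_12, eps5_zero_13, eps5_zero_14, eps5_zero_23, eps5_zero_24, eps5_zero_34, eps5_v01324, eps5_v01342, eps5_v21304, eps5_v21340, eps5_v41302, eps5_v41320]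
  ring

lemma hdzm14 (Z : Fin 5 → Fin 5 → ℂ) (ξ : Fin 5 → ℂ) :
    (1 / 2 : ℂ) * ∑ C, ξ C * ∑ P, ∑ Q, eps5 C 1 4 P Q * star (Z P Q) = (1 / 2 : ℂ) * (ξ 0 * star (Z 2 3) + -(ξ 0 * star (Z 3 2)) + -(ξ 2 * star (Z 0 3)) + ξ 2 * star (Z 3 0) + ξ 3 * star (Z 0 2) + -(ξ 3 * star (Z 2 0))) := by
  simp only [Fin.sum_univ_five, eps5_zero_01, eps5_zero_02, eps5_zero_03, eps5_zero_04, eps5_zero_12, eps5_zero_13, eps5_zero_14, eps5_zero_23, eps5_zero_24, eps5_zero_34, eps5_v01423, eps5_v01432, eps5_v21403, eps5_v21430, eps5_v31402, eps5_v31420]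
  ring

lemma hdzm20 (Z : Fin 5 → Fin 5 → ℂ) (ξ : Fin 5 → ℂ) :
    (1 / 2 : ℂ) * ∑ C, ξ C * ∑ P, ∑ Q, eps5 C 2 0 P Q * star (Z P Q) = (1 / 2 : ℂ) * (ξ 1 * star (Z 3 4) + -(ξ 1 * star (Z 4 3)) + -(ξ 3 * star (Z 1 4)) + ξ 3 * star (Z 4 1) + ξ 4 * star (Z 1 3) + -(ξ 4 * star (Z 3 1))) := by
  simp only [Fin.sum_univ_five, eps5_zero_01, eps5_zero_02, eps5_zero_03, eps5_zero_04, eps5_zero_12, eps5_zero_13, eps5_zero_14, eps5_zero_23, eps5_zero_24, eps5_zero_34, eps5_v12034, eps5_v12043, eps5_v32014, eps5_v32041, eps5_v42013, eps5_v42031]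
  ring

lemma hdzm21 (Z : Fin 5 → Fin 5 → ℂ) (ξ : Fin 5 → ℂ) :
    (1 / 2 : ℂ) * ∑ C, ξ C * ∑ P, ∑ Q, eps5 C 2 1 P Q * star (Z P Q) = (1 / 2 : ℂ) * (-(ξ 0 * star (Z 3 4)) + ξ 0 * star (Z 4 3) + ξ 3 * star (Z 0 4) + -(ξ 3 * star (Z 4 0)) + -(ξ 4 * star (Z 0 3)) + ξ 4 * star (Z 3 0)) := by
  simp only [Fin.sum_univ_five, eps5_zero_01, eps5_zero_02, eps5_zero_03, eps5_zero_04, eps5_zero_12, eps5_zero_13, eps5_zero_14, eps5_zero_23, eps5_zero_24, eps5_zero_34, eps5_v02134, eps5_v02143, eps5_v32104, eps5_v32140, eps5_v42103, eps5_v42130]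
  ring

lemma hdzm22 (Z : Fin 5 → Fin 5 → ℂ) (ξ : Fin 5 → ℂ) :
    (1 / 2 : ℂ) * ∑ C, ξ C * ∑ P, ∑ Q, eps5 C 2 2 P Q * star (Z P Q) = 0 := by
  simp only [Fin.sum_univ_five, eps5_zero_01, eps5_zero_02, eps5_zero_03, eps5_zero_04, eps5_zero_12, eps5_zero_13, eps5_zero_14, eps5_zero_23, eps5_zero_24, eps5_zero_34]
  ring

lemma hdzm23 (Z : Fin 5 → Fin 5 → ℂ) (ξ : Fin 5 → ℂ) :
    (1 / 2 : ℂ) * ∑ C, ξ C * ∑ P, ∑ Q, eps5 C 2 3 P Q * star (Z P Q) = (1 / 2 : ℂ) * (ξ 0 * star (Z 1 4) + -(ξ 0 * star (Z 4 1)) + -(ξ 1 * star (Z 0 4)) + ξ 1 * star (Z 4 0) + ξ 4 * star (Z 0 1) + -(ξ 4 * star (Z 1 0))) := by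
  simp only [Fin.sum_univ_five, eps5_zero_01, eps5_zero_02, eps5_zero_03, eps5_zero_04, eps5_zero_12, eps5_zero_13, eps5_zero_14, eps5_zero_23, eps5_zero_24, eps5_zero_34, eps5_v02314, eps5_v02341, eps5_v12304, eps5_v12340, eps5_v42301, eps5_v42310]
  ring

lemma hdzm24 (Z : Fin 5 → Fin 5 → ℂ) (ξ : Fin 5 → ℂ) :
    (1 / 2 : ℂ) * ∑ C, ξ C * ∑ P, ∑ Q, eps5 C 2 4 P Q * star (Z P Q) = (1 / 2 : ℂ) * (-(ξ 0 * star (Z 1 3)) + ξ 0 * star (Z 3 1) + ξ 1 * star (Z 0 3) + -(ξ 1 * star (Z 3 0)) + -(ξ 3 * star (Z 0 1)) + ξ 3 * star (Z 1 0)) := by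
  simp only [Fin.sum_univ_five, eps5_zero_01, eps5_zero_02, eps5_zero_03, eps5_zero_04, eps5_zero_12, eps5_zero_13, eps5_zero_14, eps5_zero_23, eps5_zero_24, eps5_zero_34, eps5_v02413, eps5_v02431, eps5_v12403, eps5_v12430, eps5_v32401, eps5_v32410]
  ring

lemma hdzm30 (Z : Fin 5 → Fin 5 → ℂ) (ξ : Fin 5 → ℂ) :
    (1 / 2 : ℂ) * ∑ C, ξ C * ∑ P, ∑ Q, eps5 C 3 0 P Q * star (Z P Q) = (1 / 2 : ℂ) * (-(ξ 1 * star (Z 2 4)) + ξ 1 * star (Z 4 2) + ξ 2 * star (Z 1 4) + -(ξ 2 * star (Z 4 1)) + -(ξ 4 * star (Z 1 2)) + ξ 4 * star (Z 2 1)) := by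
  simp only [Fin.sum_univ_five, eps5_zero_01, eps5_zero_02, eps5_zero_03, eps5_zero_04, eps5_zero_12, eps5_zero_13, eps5_zero_14, eps5_zero_23, eps5_zero_24, eps5_zero_34, eps5_v13024, eps5_v13042, eps5_v23014, eps5_v23041, eps5_v43012, eps5_v43021]
  ring

lemma hdzm31 (Z : Fin 5 → Fin 5 → ℂ) (ξ : Fin 5 → ℂ) :
    (1 / 2 : ℂ) * ∑ C, ξ C * ∑ P, ∑ Q, eps5 C 3 1 P Q * star (Z P Q) = (1 / 2 : ℂ) * (ξ 0 * star (Z 2 4) + -(ξ 0 * star (Z 4 2)) + -(ξ 2 * star (Z 0 4)) + ξ 2 * star (Z 4 0) + ξ 4 * star (Z 0 2) + -(ξ 4 * star (Z 2 0))) := by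
  simp only [Fin.sum_univ_five, eps5_zero_01, eps5_zero_02, eps5_zero_03, eps5_zero_04, eps5_zero_12, eps5_zero_13, eps5_zero_14, eps5_zero_23, eps5_zero_24, eps5_zero_34, eps5_v03124, eps5_v03142, eps5_v23104, eps5_v23140, eps5_v43102, eps5_v43120]
  ring

lemma hdzm32 (Z : Fin 5 → Fin 5 → ℂ) (ξ : Fin 5 → ℂ) :
    (1 / 2 : ℂ) * ∑ C, ξ C * ∑ P, ∑ Q, eps5 C 3 2 P Q * star (Z P Q) = (1 / 2 : ℂ) * (-(ξ 0 * star (Z 1 4)) + ξ 0 * star (Z 4 1) + ξ 1 * star (Z 0 4) + -(ξ 1 * star (Z 4 0)) + -(ξ 4 * star (Z 0 1)) + ξ 4 * star (Z 1 0)) := by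
  simp only [Fin.sum_univ_five, eps5_zero_01, eps5_zero_02, eps5_zero_03, eps5_zero_04, eps5_zero_12, eps5_zero_13, eps5_zero_14, eps5_zero_23, eps5_zero_24, eps5_zero_34, eps5_v03214, eps5_v03241, eps5_v13204, eps5_v13240, eps5_v43201, eps5_v43210]
  ring

lemma hdzm33 (Z : Fin 5 → Fin 5 → ℂ) (ξ : Fin 5 → ℂ) :
    (1 / 2 : ℂ) * ∑ C, ξ C * ∑ P, ∑ Q, eps5 C 3 3 P Q * star (Z P Q) = 0 := by
  simp only [Fin.sum_univ_five, eps5_zero_01, eps5_zero_02, eps5_zero_03, eps5_zero_04, eps5_zero_12, eps5_zero_13, eps5_zero_14, eps5_zero_23, eps5_zero_24, eps5_zero_34]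
  ring

lemma hdzm34 (Z : Fin 5 → Fin 5 → ℂ) (ξ : Fin 5 → ℂ) :
    (1 / 2 : ℂ) * ∑ C, ξ C * ∑ P, ∑ Q, eps5 C 3 4 P Q * star (Z P Q) = (1 / 2 : ℂ) * (ξ 0 * star (Z 1 2) + -(ξ 0 * star (Z 2 1)) + -(ξ 1 * star (Z 0 2)) + ξ 1 * star (Z 2 0) + ξ 2 * star (Z 0 1) + -(ξ 2 * star (Z 1 0))) := by
  simp only [Fin.sum_univ_five, eps5_zero_01, eps5_zero_02, eps5_zero_03, eps5_zero_04, eps5_zero_12, eps5_zero_13, eps5_zero_14, eps5_zero_23, eps5_zero_24, eps5_zero_34, eps5_v03412, eps5_v03421, eps5_v13402, eps5_v13420, eps5_v23401, eps5_v23410]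
  ring

lemma hdzm40 (Z : Fin 5 → Fin 5 → ℂ) (ξ : Fin 5 → ℂ) :
    (1 / 2 : ℂ) * ∑ C, ξ C * ∑ P, ∑ Q, eps5 C 4 0 P Q * star (Z P Q) = (1 / 2 : ℂ) * (ξ 1 * star (Z 2 3) + -(ξ 1 * star (Z 3 2)) + -(ξ 2 * star (Z 1 3)) + ξ 2 * star (Z 3 1) + ξ 3 * star (Z 1 2) + -(ξ 3 * star (Z 2 1))) := by
  simp only [Fin.sum_univ_five, eps5_zero_01, eps5_zero_02, eps5_zero_03, eps5_zero_04, eps5_zero_12, eps5_zero_13, eps5_zero_14, eps5_zero_23, eps5_zero_24, eps5_zero_34, eps5_v14023, eps5_v14032, eps5_v24013, eps5_v24031, eps5_v34012, eps5_v34021]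
  ring

lemma hdzm41 (Z : Fin 5 → Fin 5 → ℂ) (ξ : Fin 5 → ℂ) :
    (1 / 2 : ℂ) * ∑ C, ξ C * ∑ P, ∑ Q, eps5 C 4 1 P Q * star (Z P Q) = (1 / 2 : ℂ) * (-(ξ 0 * star (Z 2 3)) + ξ 0 * star (Z 3 2) + ξ 2 * star (Z 0 3) + -(ξ 2 * star (Z 3 0)) + -(ξ 3 * star (Z 0 2)) + ξ 3 * star (Z 2 0)) := by
  simp only [Fin.sum_univ_five, eps5_zero_01, eps5_zero_02, eps5_zero_03, eps5_zero_04, eps5_zero_12, eps5_zero_13, eps5_zero_14, eps5_zero_23, eps5_zero_24, eps5_zero_34, eps5_v04123, eps5_v04132, eps5_v24103, eps5_v24130, eps5_v34102, eps5_v34120]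
  ring

lemma hdzm42 (Z : Fin 5 → Fin 5 → ℂ) (ξ : Fin 5 → ℂ) :
    (1 / 2 : ℂ) * ∑ C, ξ C * ∑ P, ∑ Q, eps5 C 4 2 P Q * star (Z P Q) = (1 / 2 : ℂ) * (ξ 0 * star (Z 1 3) + -(ξ 0 * star (Z 3 1)) + -(ξ 1 * star (Z 0 3)) + ξ 1 * star (Z 3 0) + ξ 3 * star (Z 0 1) + -(ξ 3 * star (Z 1 0))) := by
  simp only [Fin.sum_univ_five, eps5_zero_01, eps5_zero_02, eps5_zero_03, eps5_zero_04, eps5_zero_12, eps5_zero_13, eps5_zero_14, eps5_zero_23, eps5_zero_24, eps5_zero_34, eps5_v04213, eps5_v04231, eps5_v14203, eps5_v14230, eps5_v34201, eps5_v34210]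
  ring

lemma hdzm43 (Z : Fin 5 → Fin 5 → ℂ) (ξ : Fin 5 → ℂ) :
    (1 / 2 : ℂ) * ∑ C, ξ C * ∑ P, ∑ Q, eps5 C 4 3 P Q * star (Z P Q) = (1 / 2 : ℂ) * (-(ξ 0 * star (Z 1 2)) + ξ 0 * star (Z 2 1) + ξ 1 * star (Z 0 2) + -(ξ 1 * star (Z 2 0)) + -(ξ 2 * star (Z 0 1)) + ξ 2 * star (Z 1 0)) := by
  simp only [Fin.sum_univ_five, eps5_zero_01, eps5_zero_02, eps5_zero_03, eps5_zero_04, eps5_zero_12, eps5_zero_13, eps5_zero_14, eps5_zero_23, eps5_zero_24, eps5_zero_34, eps5_v04312, eps5_v04321, eps5_v14302, eps5_v14320, eps5_v24301, eps5_v24310]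
  ring

lemma hdzm44 (Z : Fin 5 → Fin 5 → ℂ) (ξ : Fin 5 → ℂ) :
    (1 / 2 : ℂ) * ∑ C, ξ C * ∑ P, ∑ Q, eps5 C 4 4 P Q * star (Z P Q) = 0 := by
  simp only [Fin.sum_univ_five, eps5_zero_01, eps5_zero_02, eps5_zero_03, eps5_zero_04, eps5_zero_12, eps5_zero_13, eps5_zero_14, eps5_zero_23, eps5_zero_24, eps5_zero_34]
  ring

lemma hdzm (Z : Fin 5 → Fin 5 → ℂ) (ξ : Fin 5 → ℂ) : ∀ A B, (1 / 2 : ℂ) * ∑ C, ξ C * ∑ P, ∑ Q, eps5 C A B P Q * star (Z P Q) = dzm Z ξ A B := by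
  intro A B
  fin_cases A <;> fin_cases B
  exacts [hdzm00 Z ξ, hdzm01 Z ξ, hdzm02 Z ξ, hdzm03 Z ξ, hdzm04 Z ξ, hdzm10 Z ξ, hdzm11 Z ξ, hdzm12 Z ξ, hdzm13 Z ξ, hdzm14 Z ξ, hdzm20 Z ξ, hdzm21 Z ξ, hdzm22 Z ξ, hdzm23 Z ξ, hdzm24 Z ξ, hdzm30 Z ξ, hdzm31 Z ξ, hdzm32 Z ξ, hdzm33 Z ξ, hdzm34 Z ξ, hdzm40 Z ξ, hdzm41 Z ξ, hdzm42 Z ξ, hdzm43 Z ξ, hdzm44 Z ξ]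

theorem n5_invariant (Z : Fin 5 → Fin 5 → ℂ)
    (hZ : ∀ A B, Z B A = -Z A B)
    (ξ : Fin 5 → ℂ) :
    let dZ : Fin 5 → Fin 5 → ℂ := fun A B =>
      (1 / 2 : ℂ) * ∑ C, ξ C * ∑ P, ∑ Q, eps5 C A B P Q * star (Z P Q)
    let TrA : ℂ := ∑ A, ∑ B, Z A B * star (Z B A)
    let dTrA : ℂ := ∑ A, ∑ B, (dZ A B * star (Z B A) + Z A B * star (dZ B A))
    let dTrA2 : ℂ := ∑ A, ∑ B, ∑ C, ∑ D,
      (dZ A B * star (Z B C) * Z C D * star (Z D A) +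
        Z A B * star (dZ B C) * Z C D * star (Z D A) +
        Z A B * star (Z B C) * dZ C D * star (Z D A) +
        Z A B * star (Z B C) * Z C D * star (dZ D A))
    (1 / 4 : ℂ) * (4 * dTrA2 - 2 * TrA * dTrA) = 0 := by
  have hzd : ∀ i : Fin 5, Z i i = 0 := fun i => by have h := hZ i i; linear_combination h / 2
  have h10 : Z 1 0 = -Z 0 1 := hZ 0 1
  have h20 : Z 2 0 = -Z 0 2 := hZ 0 2
  have h30 : Z 3 0 = -Z 0 3 := hZ 0 3
  have h40 : Z 4 0 = -Z 0 4 := hZ 0 4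
  have h21 : Z 2 1 = -Z 1 2 := hZ 1 2
  have h31 : Z 3 1 = -Z 1 3 := hZ 1 3
  have h41 : Z 4 1 = -Z 1 4 := hZ 1 4
  have h32 : Z 3 2 = -Z 2 3 := hZ 2 3
  have h42 : Z 4 2 = -Z 2 4 := hZ 2 4
  have h43 : Z 4 3 = -Z 3 4 := hZ 3 4
  simp only [hdzm Z ξ]
  simp only [Fin.sum_univ_five]
  simp only [dzm, Matrix.cons_val_zero, Matrix.cons_val_one, Matrix.cons_val_two, Matrix.cons_val_three, Matrix.cons_val_four, Matrix.head_cons, Matrix.tail_cons, hzd, h10, h20, h30, h40, h21, h31, h41, h32, h42, h43,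
    star_add, star_neg, star_mul', star_star, star_zero, star_div₀, star_one, star_ofNat,
    mul_zero, zero_mul, add_zero, zero_add, neg_zero, mul_neg, neg_mul, neg_neg]
  ring
end

section
/- Let e₁, e₂, e₃, e₄ ∈ ℝ transform as δe₁ = ξ₁₂e₂ + ξ₁₃e₃ + ξ₁₄e₄, δe₂ = ξ₁₂e₁ + ξ₁₃e₄ + ξ₁₄e₃, δe₃ = ξ₁₂e₄ + ξ₁₃e₁ + ξ₁₄e₂, δe₄ = ξ₁₂e₃ + ξ₁₃e₂ + ξ₁₄e₁ for arbitrary real ξ₁₂, ξ₁₃, ξ₁₄. Then the quartic expression 4·2(e₁⁴+e₂⁴+e₃⁴+e₄⁴) − 4(e₁²+e₂²+e₃²+e₄²)² + 32 e₁e₂e₃e₄ is invariant to first order in the ξ parameters. -/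
theorem n8_normal_frame_invariant (e₁ e₂ e₃ e₄ ξ₁₂ ξ₁₃ ξ₁₄ : ℝ) :
    let de₁ : ℝ := ξ₁₂ * e₂ + ξ₁₃ * e₃ + ξ₁₄ * e₄
    let de₂ : ℝ := ξ₁₂ * e₁ + ξ₁₃ * e₄ + ξ₁₄ * e₃
    let de₃ : ℝ := ξ₁₂ * e₄ + ξ₁₃ * e₁ + ξ₁₄ * e₂
    let de₄ : ℝ := ξ₁₂ * e₃ + ξ₁₃ * e₂ + ξ₁₄ * e₁
    4 * 2 * (4 * e₁ ^ 3 * de₁ + 4 * e₂ ^ 3 * de₂ + 4 * e₃ ^ 3 * de₃ + 4 * e₄ ^ 3 * de₄) -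
        4 * (2 * (e₁ ^ 2 + e₂ ^ 2 + e₃ ^ 2 + e₄ ^ 2) *
          (2 * e₁ * de₁ + 2 * e₂ * de₂ + 2 * e₃ * de₃ + 2 * e₄ * de₄)) +
        32 * (de₁ * e₂ * e₃ * e₄ + e₁ * de₂ * e₃ * e₄ + e₁ * e₂ * de₃ * e₄ +
          e₁ * e₂ * e₃ * de₄) = 0 := by
  dsimp only
  ring
end

section
/- Let Z_{AB} be an N×N complex antisymmetric matrix (N even) in normal form, i.e. block diagonal with 2×2 blocks e_k·ε (ε = [[0,1],[−1,0]]) with e_k ≥ 0, and suppose ε^{ABCD L₁⋯L_{N−4}} Z_{AB} Z_{CD} = 0 for all values of the free indices L₁,…,L_{N−4}. Then at most one of the skew-eigenvalues e_k is nonzero. -/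
open Finset

/-- The totally antisymmetric symbol on `n` indices, evaluated on the tuple `v`. -/
noncomputable def epsN (n : ℕ) (v : Fin n → Fin n) : ℂ :=
  ∑ σ : Equiv.Perm (Fin n), if ⇑σ = v then ((Equiv.Perm.sign σ : ℤ) : ℂ) else 0

lemma epsN_perm {n : ℕ} (σ : Equiv.Perm (Fin n)) :
    epsN n ⇑σ = ((Equiv.Perm.sign σ : ℤ) : ℂ) := by
  rw [epsN, Finset.sum_eq_single σ]
  · simp
  · intro τ _ hτ
    exact if_neg fun h => hτ (Equiv.coe_fn_injective h)
  · intro h; exact absurd (Finset.mem_univ σ) h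

lemma epsN_zero {n : ℕ} {v : Fin n → Fin n} (h : ¬ Function.Injective v) :
    epsN n v = 0 := by
  rw [epsN]
  refine Finset.sum_eq_zero fun σ _ => ?_
  rw [if_neg]
  rintro rfl
  exact h σ.injective

def vtup (n : ℕ) (L : ℕ → Fin n) (A B C D : Fin n) : Fin n → Fin n :=
  fun i => if i.val = 0 then A else if i.val = 1 then B else if i.val = 2 then C
    else if i.val = 3 then D else L i.val

lemma epsN_vtup_zero {n : ℕ} (L : ℕ → Fin n) (A B C D : Fin n) {p q : Fin n}
    (hpq : p ≠ q) (h : vtup n L A B C D p = vtup n L A B C D q) :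
    epsN n (vtup n L A B C D) = 0 :=
  epsN_zero fun hinj => hpq (hinj h)

lemma vtup_eq_perm {n : ℕ} (L : ℕ → Fin n) (σ : Equiv.Perm (Fin n))
    {i0 i1 i2 i3 : Fin n} (h0 : i0.val = 0) (h1 : i1.val = 1) (h2 : i2.val = 2)
    (h3 : i3.val = 3)
    (hL : ∀ i : Fin n, 4 ≤ i.val → L i.val = σ i) :
    vtup n L (σ i0) (σ i1) (σ i2) (σ i3) = ⇑σ := by
  funext x
  rcases Nat.lt_or_ge x.val 4 with h | h
  · have hx : x.val = 0 ∨ x.val = 1 ∨ x.val = 2 ∨ x.val = 3 := by omega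
    obtain hx | hx | hx | hx := hx
    · have : x = i0 := Fin.ext (by omega)
      subst this; simp [vtup, hx]
    · have : x = i1 := Fin.ext (by omega)
      subst this; simp [vtup, hx]
    · have : x = i2 := Fin.ext (by omega)
      subst this; simp [vtup, hx]
    · have : x = i3 := Fin.ext (by omega)
      subst this; simp [vtup, hx]
  · simp only [vtup]
    rw [if_neg (by omega), if_neg (by omega), if_neg (by omega), if_neg (by omega)]
    exact hL x h


lemma pair_struct {k l A B : ℕ}
    (hA : A = 2*k ∨ A = 2*k+1 ∨ A = 2*l ∨ A = 2*l+1)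
    (hdiv : A / 2 = B / 2) (hpar : A % 2 = 0 ∧ B % 2 = 1 ∨ A % 2 = 1 ∧ B % 2 = 0) :
    (A = 2*k ∧ B = 2*k+1) ∨ (A = 2*k+1 ∧ B = 2*k) ∨
      (A = 2*l ∧ B = 2*l+1) ∨ (A = 2*l+1 ∧ B = 2*l) := by
  omega

lemma aux_blocks {k l A B C D : ℕ} (hkl : k ≠ l)
    (hA : A = 2*k ∨ A = 2*k+1 ∨ A = 2*l ∨ A = 2*l+1)
    (hC : C = 2*k ∨ C = 2*k+1 ∨ C = 2*l ∨ C = 2*l+1)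
    (hdiv : A / 2 = B / 2) (hpar : A % 2 = 0 ∧ B % 2 = 1 ∨ A % 2 = 1 ∧ B % 2 = 0)
    (hdiv' : C / 2 = D / 2) (hpar' : C % 2 = 0 ∧ D % 2 = 1 ∨ C % 2 = 1 ∧ D % 2 = 0)
    (h1 : A ≠ C) (h2 : A ≠ D) (h3 : B ≠ C) (h4 : B ≠ D)
    (hxT : ¬(A = 2*k ∧ B = 2*k+1 ∧ C = 2*l ∧ D = 2*l+1) ∧
      ¬(A = 2*k+1 ∧ B = 2*k ∧ C = 2*l ∧ D = 2*l+1) ∧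
      ¬(A = 2*k ∧ B = 2*k+1 ∧ C = 2*l+1 ∧ D = 2*l) ∧
      ¬(A = 2*k+1 ∧ B = 2*k ∧ C = 2*l+1 ∧ D = 2*l) ∧
      ¬(A = 2*l ∧ B = 2*l+1 ∧ C = 2*k ∧ D = 2*k+1) ∧
      ¬(A = 2*l+1 ∧ B = 2*l ∧ C = 2*k ∧ D = 2*k+1) ∧
      ¬(A = 2*l ∧ B = 2*l+1 ∧ C = 2*k+1 ∧ D = 2*k) ∧
      ¬(A = 2*l+1 ∧ B = 2*l ∧ C = 2*k+1 ∧ D = 2*k)) : False := by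
  obtain ⟨x1, x2, x3, x4, x5, x6, x7, x8⟩ := hxT
  have hAB := pair_struct hA hdiv hpar
  have hCD := pair_struct hC hdiv' hpar'
  clear hA hC hdiv hpar hdiv' hpar'
  rcases hAB with ⟨hA1, hB1⟩ | ⟨hA1, hB1⟩ | ⟨hA1, hB1⟩ | ⟨hA1, hB1⟩ <;>
    rcases hCD with ⟨hC1, hD1⟩ | ⟨hC1, hD1⟩ | ⟨hC1, hD1⟩ | ⟨hC1, hD1⟩ <;>
      subst hA1 hB1 hC1 hD1 <;>
        first
          | exact h1 rfl
          | exact h2 rfl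
          | exact h3 rfl
          | exact h4 rfl
          | exact x1 ⟨rfl, rfl, rfl, rfl⟩
          | exact x2 ⟨rfl, rfl, rfl, rfl⟩
          | exact x3 ⟨rfl, rfl, rfl, rfl⟩
          | exact x4 ⟨rfl, rfl, rfl, rfl⟩
          | exact x5 ⟨rfl, rfl, rfl, rfl⟩
          | exact x6 ⟨rfl, rfl, rfl, rfl⟩
          | exact x7 ⟨rfl, rfl, rfl, rfl⟩
          | exact x8 ⟨rfl, rfl, rfl, rfl⟩

set_option maxHeartbeats 1000000 in
/-- If an antisymmetric central charge matrix in normal form (2×2 blocks `e_k ε`, `e_k ≥ 0`)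
satisfies the attractor conditions `ε^{ABCD L₁⋯L_{N-4}} Z_{AB} Z_{CD} = 0` for all values of
the free indices, then at most one skew-eigenvalue `e_k` is nonzero. -/
theorem attractor_forces_single_eigenvalue (m : ℕ) (hm : 2 ≤ m)
    (e : ℕ → ℝ) (he : ∀ k, 0 ≤ e k)
    (Z : Matrix (Fin (2 * m)) (Fin (2 * m)) ℂ)
    (hZ : ∀ i j : Fin (2 * m), Z i j =
      if i.val / 2 = j.val / 2 then
        (if i.val % 2 = 0 ∧ j.val % 2 = 1 then (e (i.val / 2) : ℂ)
         else if i.val % 2 = 1 ∧ j.val % 2 = 0 then -(e (i.val / 2) : ℂ)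
         else 0)
      else 0)
    (hfix : ∀ L : ℕ → Fin (2 * m),
      ∑ A, ∑ B, ∑ C, ∑ D,
        epsN (2 * m)
          (fun i => if i.val = 0 then A else if i.val = 1 then B
            else if i.val = 2 then C else if i.val = 3 then D else L i.val) *
          Z A B * Z C D = 0) :
    ∀ k l, k < m → l < m → e k ≠ 0 → e l ≠ 0 → k = l := by
  intro k l hk hl hek hel
  by_contra hkl
  classical
  -- distinguished indices
  obtain ⟨a, ha⟩ : ∃ x : Fin (2*m), x.val = 2*k := ⟨⟨2*k, by omega⟩, rfl⟩
  obtain ⟨a', ha'⟩ : ∃ x : Fin (2*m), x.val = 2*k+1 := ⟨⟨2*k+1, by omega⟩, rfl⟩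
  obtain ⟨b, hb⟩ : ∃ x : Fin (2*m), x.val = 2*l := ⟨⟨2*l, by omega⟩, rfl⟩
  obtain ⟨b', hb'⟩ : ∃ x : Fin (2*m), x.val = 2*l+1 := ⟨⟨2*l+1, by omega⟩, rfl⟩
  obtain ⟨i0, hi0⟩ : ∃ x : Fin (2*m), x.val = 0 := ⟨⟨0, by omega⟩, rfl⟩
  obtain ⟨i1, hi1⟩ : ∃ x : Fin (2*m), x.val = 1 := ⟨⟨1, by omega⟩, rfl⟩
  obtain ⟨i2, hi2⟩ : ∃ x : Fin (2*m), x.val = 2 := ⟨⟨2, by omega⟩, rfl⟩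
  obtain ⟨i3, hi3⟩ : ∃ x : Fin (2*m), x.val = 3 := ⟨⟨3, by omega⟩, rfl⟩
  have hne : ∀ (p q : Fin (2*m)), p.val ≠ q.val → p ≠ q :=
    fun p q h hh => h (congrArg Fin.val hh)
  -- nonzero structure of Z
  have hZne : ∀ A B : Fin (2*m), Z A B ≠ 0 →
      A.val / 2 = B.val / 2 ∧
        ((A.val % 2 = 0 ∧ B.val % 2 = 1) ∨ (A.val % 2 = 1 ∧ B.val % 2 = 0)) := by
    intro A B h
    rw [hZ] at h
    split_ifs at h with h1 h2 h3
    · exact ⟨h1, Or.inl h2⟩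
    · exact ⟨h1, Or.inr h3⟩
    · exact absurd rfl h
    · exact absurd rfl h
  -- specific values of Z
  have hq1 : (2*k)/2 = k := by omega
  have hq2 : (2*k+1)/2 = k := by omega
  have hq3 : (2*l)/2 = l := by omega
  have hq4 : (2*l+1)/2 = l := by omega
  have hZaa' : Z a a' = (e k : ℂ) := by
    rw [hZ]; simp [ha, ha', hq1, hq2, Nat.mul_mod_right, Nat.add_mod]
  have hZa'a : Z a' a = -(e k : ℂ) := by
    rw [hZ]; simp [ha, ha', hq1, hq2, Nat.mul_mod_right, Nat.add_mod]
  have hZbb' : Z b b' = (e l : ℂ) := by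
    rw [hZ]; simp [hb, hb', hq3, hq4, Nat.mul_mod_right, Nat.add_mod]
  have hZb'b : Z b' b = -(e l : ℂ) := by
    rw [hZ]; simp [hb, hb', hq3, hq4, Nat.mul_mod_right, Nat.add_mod]
  -- the 4-element sets
  have hs4 : True := trivial
  let s4 : Finset (Fin (2*m)) := {a, a', b, b'}
  have hmem_s4 : ∀ x : Fin (2*m), x ∈ s4 ↔
      (x.val = 2*k ∨ x.val = 2*k+1 ∨ x.val = 2*l ∨ x.val = 2*l+1) := by
    intro x
    simp only [s4, mem_insert, mem_singleton, Fin.ext_iff, ha, ha', hb, hb']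
  let t4 : Finset (Fin (2*m)) := {i0, i1, i2, i3}
  have hmem_t4 : ∀ x : Fin (2*m), x ∈ t4 ↔ x.val < 4 := by
    intro x
    simp only [t4, mem_insert, mem_singleton, Fin.ext_iff, hi0, hi1, hi2, hi3]
    omega
  have hcard_s4 : s4.card = 4 := by
    rw [show s4 = {a,a',b,b'} from rfl, card_insert_of_notMem, card_insert_of_notMem, card_insert_of_notMem,
      card_singleton]
    · simp only [mem_singleton, Fin.ext_iff, hb, hb']; omega
    · simp only [mem_insert, mem_singleton, Fin.ext_iff, ha', hb, hb']; omega
    · simp only [mem_insert, mem_singleton, Fin.ext_iff, ha, ha', hb, hb']; omega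
  have hcard_t4 : t4.card = 4 := by
    rw [show t4 = {i0,i1,i2,i3} from rfl, card_insert_of_notMem, card_insert_of_notMem, card_insert_of_notMem,
      card_singleton]
    · simp only [mem_singleton, Fin.ext_iff, hi2, hi3]; omega
    · simp only [mem_insert, mem_singleton, Fin.ext_iff, hi1, hi2, hi3]; omega
    · simp only [mem_insert, mem_singleton, Fin.ext_iff, hi0, hi1, hi2, hi3]; omega
  have hcardc : (t4ᶜ).card = (s4ᶜ).card := by
    rw [card_compl, card_compl, hcard_s4, hcard_t4]
  let E : ↥(t4ᶜ) ≃ ↥(s4ᶜ) := Finset.equivOfCardEq hcardc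
  -- construct the permutation σ₀
  let f : Fin (2*m) → Fin (2*m) := fun x =>
    if hx : x.val < 4 then
      (if x.val = 0 then a else if x.val = 1 then a' else if x.val = 2 then b else b')
    else ↑(E ⟨x, by rw [mem_compl, hmem_t4]; omega⟩)
  have hf_lt_val : ∀ x : Fin (2*m), x.val < 4 → (f x).val =
      (if x.val = 0 then 2*k else if x.val = 1 then 2*k+1 else if x.val = 2 then 2*l
        else 2*l+1) := by
    intro x hx
    simp only [f, dif_pos hx]
    split_ifs <;> simp [ha, ha', hb, hb']
  have hf_lt : ∀ x : Fin (2*m), x.val < 4 → f x ∈ s4 := by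
    intro x hx
    rw [hmem_s4, hf_lt_val x hx]
    split_ifs <;> omega
  have hf_ge : ∀ x : Fin (2*m), ¬ x.val < 4 → f x ∉ s4 := by
    intro x hx
    simp only [f, dif_neg hx]
    exact (Finset.mem_compl.mp (Finset.coe_mem _))
  have hfinj : Function.Injective f := by
    intro x y hxy
    by_cases hx : x.val < 4 <;> by_cases hy : y.val < 4
    · have hvx := hf_lt_val x hx
      have hvy := hf_lt_val y hy
      rw [hxy] at hvx
      refine Fin.ext ?_
      split_ifs at hvx hvy <;> omega
    · exact absurd (hxy ▸ hf_lt x hx) (hf_ge y hy)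
    · exact absurd ((hxy.symm) ▸ hf_lt y hy) (hf_ge x hx)
    · have h1 : (E ⟨x, by rw [mem_compl, hmem_t4]; omega⟩ : Fin (2*m)) =
          (E ⟨y, by rw [mem_compl, hmem_t4]; omega⟩ : Fin (2*m)) := by
        simpa only [f, dif_neg hx, dif_neg hy] using hxy
      have h2 := E.injective (Subtype.ext h1)
      exact congrArg Subtype.val h2
  -- the permutation σ₀
  have hfbij : Function.Bijective f := Finite.injective_iff_bijective.mp hfinj
  let σ₀ : Equiv.Perm (Fin (2*m)) := Equiv.ofBijective f hfbij
  have hσf : ∀ x, σ₀ x = f x := fun x => rfl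
  have hσ0 : σ₀ i0 = a := by
    rw [hσf]; simp only [f, dif_pos (show i0.val < 4 by omega)]
    rw [if_pos hi0]
  have hσ1 : σ₀ i1 = a' := by
    rw [hσf]; simp only [f, dif_pos (show i1.val < 4 by omega)]
    rw [if_neg (by omega), if_pos hi1]
  have hσ2 : σ₀ i2 = b := by
    rw [hσf]; simp only [f, dif_pos (show i2.val < 4 by omega)]
    rw [if_neg (by omega), if_neg (by omega), if_pos hi2]
  have hσ3 : σ₀ i3 = b' := by
    rw [hσf]; simp only [f, dif_pos (show i3.val < 4 by omega)]
    rw [if_neg (by omega), if_neg (by omega), if_neg (by omega)]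
  have hσ_lt : ∀ x : Fin (2*m), x.val < 4 → σ₀ x ∈ s4 := fun x hx => hf_lt x hx
  have hsur : ∀ A : Fin (2*m), A ∉ s4 → ∃ j : Fin (2*m), 4 ≤ j.val ∧ σ₀ j = A := by
    intro A hA
    refine ⟨σ₀.symm A, ?_, σ₀.apply_symm_apply A⟩
    by_contra hj
    exact hA (σ₀.apply_symm_apply A ▸ hσ_lt _ (by omega))
  -- the spectator indices
  let L : ℕ → Fin (2*m) := fun i => if h : i < 2*m then σ₀ ⟨i, h⟩ else a
  have hL : ∀ i : Fin (2*m), 4 ≤ i.val → L i.val = σ₀ i := by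
    intro i hi
    simp only [L, dif_pos i.isLt, Fin.eta]
  -- generic epsN evaluation
  have hEps : ∀ (π : Equiv.Perm (Fin (2*m))), (∀ x : Fin (2*m), 4 ≤ x.val → π x = x) →
      epsN (2*m) (vtup (2*m) L (σ₀ (π i0)) (σ₀ (π i1)) (σ₀ (π i2)) (σ₀ (π i3)))
        = ((Equiv.Perm.sign σ₀ : ℤ) : ℂ) * ((Equiv.Perm.sign π : ℤ) : ℂ) := by
    intro π hπ
    have h := vtup_eq_perm L (σ₀ * π) hi0 hi1 hi2 hi3 (fun i hi => by
      rw [Equiv.Perm.mul_apply, hπ i hi]; exact hL i hi)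
    simp only [Equiv.Perm.mul_apply] at h
    rw [h, epsN_perm, Equiv.Perm.sign_mul]
    rw [Units.val_mul]
    push_cast
    ring
  -- swap facts
  have hne01 : i0 ≠ i1 := hne _ _ (by omega)
  have hne23 : i2 ≠ i3 := hne _ _ (by omega)
  have hne02 : i0 ≠ i2 := hne _ _ (by omega)
  have hne13 : i1 ≠ i3 := hne _ _ (by omega)
  have t01_0 : Equiv.swap i0 i1 i0 = i1 := Equiv.swap_apply_left _ _
  have t01_1 : Equiv.swap i0 i1 i1 = i0 := Equiv.swap_apply_right _ _
  have t01_2 : Equiv.swap i0 i1 i2 = i2 :=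
    Equiv.swap_apply_of_ne_of_ne (hne _ _ (by omega)) (hne _ _ (by omega))
  have t01_3 : Equiv.swap i0 i1 i3 = i3 :=
    Equiv.swap_apply_of_ne_of_ne (hne _ _ (by omega)) (hne _ _ (by omega))
  have t23_2 : Equiv.swap i2 i3 i2 = i3 := Equiv.swap_apply_left _ _
  have t23_3 : Equiv.swap i2 i3 i3 = i2 := Equiv.swap_apply_right _ _
  have t23_0 : Equiv.swap i2 i3 i0 = i0 :=
    Equiv.swap_apply_of_ne_of_ne (hne _ _ (by omega)) (hne _ _ (by omega))
  have t23_1 : Equiv.swap i2 i3 i1 = i1 :=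
    Equiv.swap_apply_of_ne_of_ne (hne _ _ (by omega)) (hne _ _ (by omega))
  have t02_0 : Equiv.swap i0 i2 i0 = i2 := Equiv.swap_apply_left _ _
  have t02_2 : Equiv.swap i0 i2 i2 = i0 := Equiv.swap_apply_right _ _
  have t02_1 : Equiv.swap i0 i2 i1 = i1 :=
    Equiv.swap_apply_of_ne_of_ne (hne _ _ (by omega)) (hne _ _ (by omega))
  have t02_3 : Equiv.swap i0 i2 i3 = i3 :=
    Equiv.swap_apply_of_ne_of_ne (hne _ _ (by omega)) (hne _ _ (by omega))
  have t13_1 : Equiv.swap i1 i3 i1 = i3 := Equiv.swap_apply_left _ _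
  have t13_3 : Equiv.swap i1 i3 i3 = i1 := Equiv.swap_apply_right _ _
  have t13_0 : Equiv.swap i1 i3 i0 = i0 :=
    Equiv.swap_apply_of_ne_of_ne (hne _ _ (by omega)) (hne _ _ (by omega))
  have t13_2 : Equiv.swap i1 i3 i2 = i2 :=
    Equiv.swap_apply_of_ne_of_ne (hne _ _ (by omega)) (hne _ _ (by omega))
  have hswapfix : ∀ (p q : Fin (2*m)), p.val < 4 → q.val < 4 →
      ∀ x : Fin (2*m), 4 ≤ x.val → Equiv.swap p q x = x := by
    intro p q hp hq x hx
    exact Equiv.swap_apply_of_ne_of_ne (hne _ _ (by omega)) (hne _ _ (by omega))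
  -- the eight epsilon values
  have hE1 : epsN (2*m) (vtup (2*m) L a a' b b') = ((Equiv.Perm.sign σ₀ : ℤ) : ℂ) := by
    have h := hEps 1 (fun _ _ => rfl)
    rw [Equiv.Perm.one_apply, Equiv.Perm.one_apply, Equiv.Perm.one_apply,
      Equiv.Perm.one_apply, hσ0, hσ1, hσ2, hσ3, Equiv.Perm.sign_one] at h
    simpa using h
  have hE2 : epsN (2*m) (vtup (2*m) L a' a b b') = -((Equiv.Perm.sign σ₀ : ℤ) : ℂ) := by
    have h := hEps (Equiv.swap i0 i1)
      (fun x hx => hswapfix _ _ (by omega) (by omega) x hx)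
    rw [t01_0, t01_1, t01_2, t01_3, hσ0, hσ1, hσ2, hσ3,
      Equiv.Perm.sign_swap hne01] at h
    rw [h]; norm_num
  have hE3 : epsN (2*m) (vtup (2*m) L a a' b' b) = -((Equiv.Perm.sign σ₀ : ℤ) : ℂ) := by
    have h := hEps (Equiv.swap i2 i3)
      (fun x hx => hswapfix _ _ (by omega) (by omega) x hx)
    rw [t23_0, t23_1, t23_2, t23_3, hσ0, hσ1, hσ2, hσ3,
      Equiv.Perm.sign_swap hne23] at h
    rw [h]; norm_num
  have hE4 : epsN (2*m) (vtup (2*m) L a' a b' b) = ((Equiv.Perm.sign σ₀ : ℤ) : ℂ) := by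
    have h := hEps (Equiv.swap i0 i1 * Equiv.swap i2 i3)
      (fun x hx => by
        rw [Equiv.Perm.mul_apply, hswapfix _ _ (by omega) (by omega) x hx,
          hswapfix _ _ (by omega) (by omega) x hx])
    rw [Equiv.Perm.mul_apply, Equiv.Perm.mul_apply, Equiv.Perm.mul_apply,
      Equiv.Perm.mul_apply, t23_0, t23_1, t23_2, t23_3, t01_0, t01_1, t01_2, t01_3,
      hσ0, hσ1, hσ2, hσ3, Equiv.Perm.sign_mul,
      Equiv.Perm.sign_swap hne01, Equiv.Perm.sign_swap hne23] at h
    rw [h]; norm_num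
  have hE5 : epsN (2*m) (vtup (2*m) L b b' a a') = ((Equiv.Perm.sign σ₀ : ℤ) : ℂ) := by
    have h := hEps (Equiv.swap i0 i2 * Equiv.swap i1 i3)
      (fun x hx => by
        rw [Equiv.Perm.mul_apply, hswapfix _ _ (by omega) (by omega) x hx,
          hswapfix _ _ (by omega) (by omega) x hx])
    rw [Equiv.Perm.mul_apply, Equiv.Perm.mul_apply, Equiv.Perm.mul_apply,
      Equiv.Perm.mul_apply, t13_0, t13_1, t13_2, t13_3, t02_0, t02_1, t02_2, t02_3,
      hσ0, hσ1, hσ2, hσ3, Equiv.Perm.sign_mul,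
      Equiv.Perm.sign_swap hne02, Equiv.Perm.sign_swap hne13] at h
    rw [h]; norm_num
  have hE6 : epsN (2*m) (vtup (2*m) L b b' a' a) = -((Equiv.Perm.sign σ₀ : ℤ) : ℂ) := by
    have h := hEps (Equiv.swap i0 i2 * Equiv.swap i1 i3 * Equiv.swap i2 i3)
      (fun x hx => by
        rw [Equiv.Perm.mul_apply, Equiv.Perm.mul_apply,
          hswapfix _ _ (by omega) (by omega) x hx,
          hswapfix _ _ (by omega) (by omega) x hx,
          hswapfix _ _ (by omega) (by omega) x hx])
    simp only [Equiv.Perm.mul_apply] at h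
    rw [t23_0, t23_1, t23_2, t23_3, t13_0, t13_1, t13_2, t13_3,
      t02_0, t02_1, t02_2, t02_3, hσ0, hσ1, hσ2, hσ3, Equiv.Perm.sign_mul,
      Equiv.Perm.sign_mul, Equiv.Perm.sign_swap hne02, Equiv.Perm.sign_swap hne13,
      Equiv.Perm.sign_swap hne23] at h
    rw [h]; norm_num
  have hE7 : epsN (2*m) (vtup (2*m) L b' b a a') = -((Equiv.Perm.sign σ₀ : ℤ) : ℂ) := by
    have h := hEps (Equiv.swap i0 i2 * Equiv.swap i1 i3 * Equiv.swap i0 i1)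
      (fun x hx => by
        rw [Equiv.Perm.mul_apply, Equiv.Perm.mul_apply,
          hswapfix _ _ (by omega) (by omega) x hx,
          hswapfix _ _ (by omega) (by omega) x hx,
          hswapfix _ _ (by omega) (by omega) x hx])
    simp only [Equiv.Perm.mul_apply] at h
    rw [t01_0, t01_1, t01_2, t01_3, t13_0, t13_1, t13_2, t13_3,
      t02_0, t02_1, t02_2, t02_3, hσ0, hσ1, hσ2, hσ3, Equiv.Perm.sign_mul,
      Equiv.Perm.sign_mul, Equiv.Perm.sign_swap hne02, Equiv.Perm.sign_swap hne13,
      Equiv.Perm.sign_swap hne01] at h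
    rw [h]; norm_num
  have hE8 : epsN (2*m) (vtup (2*m) L b' b a' a) = ((Equiv.Perm.sign σ₀ : ℤ) : ℂ) := by
    have h := hEps (Equiv.swap i0 i2 * Equiv.swap i1 i3 * Equiv.swap i0 i1 * Equiv.swap i2 i3)
      (fun x hx => by
        rw [Equiv.Perm.mul_apply, Equiv.Perm.mul_apply, Equiv.Perm.mul_apply,
          hswapfix _ _ (by omega) (by omega) x hx,
          hswapfix _ _ (by omega) (by omega) x hx,
          hswapfix _ _ (by omega) (by omega) x hx,
          hswapfix _ _ (by omega) (by omega) x hx])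
    simp only [Equiv.Perm.mul_apply] at h
    rw [t23_0, t23_1, t23_2, t23_3, t01_0, t01_1, t01_2, t01_3,
      t13_0, t13_1, t13_2, t13_3, t02_0, t02_1, t02_2, t02_3,
      hσ0, hσ1, hσ2, hσ3, Equiv.Perm.sign_mul, Equiv.Perm.sign_mul,
      Equiv.Perm.sign_mul, Equiv.Perm.sign_swap hne02, Equiv.Perm.sign_swap hne13,
      Equiv.Perm.sign_swap hne01, Equiv.Perm.sign_swap hne23] at h
    rw [h]; norm_num
  -- the packaged summand
  let F : Fin (2*m) × Fin (2*m) × Fin (2*m) × Fin (2*m) → ℂ := fun x =>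
    epsN (2*m) (vtup (2*m) L x.1 x.2.1 x.2.2.1 x.2.2.2) * Z x.1 x.2.1 * Z x.2.2.1 x.2.2.2
  have hsum : ∑ x : Fin (2*m) × Fin (2*m) × Fin (2*m) × Fin (2*m), F x = 0 := by
    simp only [F, Fintype.sum_prod_type]
    exact hfix L
  let T : Finset (Fin (2*m) × Fin (2*m) × Fin (2*m) × Fin (2*m)) :=
    {(a,a',b,b'), (a',a,b,b'), (a,a',b',b), (a',a,b',b),
     (b,b',a,a'), (b',b,a,a'), (b,b',a',a), (b',b,a',a)}
  have hvan : ∀ x : Fin (2*m) × Fin (2*m) × Fin (2*m) × Fin (2*m), x ∉ T → F x = 0 := by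
    rintro ⟨A, B, C, D⟩ hxT
    by_cases hAB : Z A B = 0
    · simp only [F]; rw [hAB]; ring
    by_cases hCD : Z C D = 0
    · simp only [F]; rw [hCD]; ring
    suffices h : epsN (2*m) (vtup (2*m) L A B C D) = 0 by
      simp only [F]; rw [h]; ring
    have hv0 : vtup (2*m) L A B C D i0 = A := by
      simp only [vtup]; rw [if_pos hi0]
    have hv1 : vtup (2*m) L A B C D i1 = B := by
      simp only [vtup]; rw [if_neg (by omega), if_pos hi1]
    have hv2 : vtup (2*m) L A B C D i2 = C := by
      simp only [vtup]; rw [if_neg (by omega), if_neg (by omega), if_pos hi2]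
    have hv3 : vtup (2*m) L A B C D i3 = D := by
      simp only [vtup]
      rw [if_neg (by omega), if_neg (by omega), if_neg (by omega), if_pos hi3]
    have hvge : ∀ (j : Fin (2*m)), 4 ≤ j.val → vtup (2*m) L A B C D j = σ₀ j := by
      intro j hj
      simp only [vtup]
      rw [if_neg (by omega), if_neg (by omega), if_neg (by omega), if_neg (by omega)]
      exact hL j hj
    by_cases hA : A ∈ s4
    swap
    · obtain ⟨j, hj4, hjA⟩ := hsur A hA
      exact epsN_vtup_zero L A B C D (p := i0) (q := j) (hne _ _ (by omega))
        (by rw [hv0, hvge j hj4, hjA])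
    by_cases hB : B ∈ s4
    swap
    · obtain ⟨j, hj4, hjA⟩ := hsur B hB
      exact epsN_vtup_zero L A B C D (p := i1) (q := j) (hne _ _ (by omega))
        (by rw [hv1, hvge j hj4, hjA])
    by_cases hC : C ∈ s4
    swap
    · obtain ⟨j, hj4, hjA⟩ := hsur C hC
      exact epsN_vtup_zero L A B C D (p := i2) (q := j) (hne _ _ (by omega))
        (by rw [hv2, hvge j hj4, hjA])
    by_cases hD : D ∈ s4
    swap
    · obtain ⟨j, hj4, hjA⟩ := hsur D hD
      exact epsN_vtup_zero L A B C D (p := i3) (q := j) (hne _ _ (by omega))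
        (by rw [hv3, hvge j hj4, hjA])
    by_cases hAC : A = C
    · exact epsN_vtup_zero L A B C D (p := i0) (q := i2) (hne _ _ (by omega))
        (by rw [hv0, hv2, hAC])
    by_cases hAD : A = D
    · exact epsN_vtup_zero L A B C D (p := i0) (q := i3) (hne _ _ (by omega))
        (by rw [hv0, hv3, hAD])
    by_cases hBC : B = C
    · exact epsN_vtup_zero L A B C D (p := i1) (q := i2) (hne _ _ (by omega))
        (by rw [hv1, hv2, hBC])
    by_cases hBD : B = D
    · exact epsN_vtup_zero L A B C D (p := i1) (q := i3) (hne _ _ (by omega))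
        (by rw [hv1, hv3, hBD])
    exfalso
    rw [hmem_s4] at hA hB hC hD
    obtain ⟨hdiv, hpar⟩ := hZne A B hAB
    obtain ⟨hdiv', hpar'⟩ := hZne C D hCD
    have h1 : A.val ≠ C.val := fun h => hAC (Fin.ext h)
    have h2 : A.val ≠ D.val := fun h => hAD (Fin.ext h)
    have h3 : B.val ≠ C.val := fun h => hBC (Fin.ext h)
    have h4 : B.val ≠ D.val := fun h => hBD (Fin.ext h)
    simp only [T, mem_insert, mem_singleton, Prod.mk.injEq, not_or, Fin.ext_iff,
      ha, ha', hb, hb'] at hxT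
    exact aux_blocks hkl hA hC hdiv hpar hdiv' hpar' h1 h2 h3 h4 hxT
  have hTsub : ∑ x ∈ T, F x = 0 := by
    rw [Finset.sum_subset (Finset.subset_univ T) (fun x _ hx => hvan x hx)]
    exact hsum
  have d1 : ((a,a',b,b') : Fin (2*m) × Fin (2*m) × Fin (2*m) × Fin (2*m)) ∉
      ({(a',a,b,b'), (a,a',b',b), (a',a,b',b), (b,b',a,a'), (b',b,a,a'),
        (b,b',a',a), (b',b,a',a)} : Finset _) := by
    simp only [mem_insert, mem_singleton, Prod.mk.injEq, not_or, Fin.ext_iff,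
      ha, ha', hb, hb']
    omega
  have d2 : ((a',a,b,b') : Fin (2*m) × Fin (2*m) × Fin (2*m) × Fin (2*m)) ∉
      ({(a,a',b',b), (a',a,b',b), (b,b',a,a'), (b',b,a,a'),
        (b,b',a',a), (b',b,a',a)} : Finset _) := by
    simp only [mem_insert, mem_singleton, Prod.mk.injEq, not_or, Fin.ext_iff,
      ha, ha', hb, hb']
    omega
  have d3 : ((a,a',b',b) : Fin (2*m) × Fin (2*m) × Fin (2*m) × Fin (2*m)) ∉
      ({(a',a,b',b), (b,b',a,a'), (b',b,a,a'), (b,b',a',a), (b',b,a',a)} : Finset _) := by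
    simp only [mem_insert, mem_singleton, Prod.mk.injEq, not_or, Fin.ext_iff,
      ha, ha', hb, hb']
    omega
  have d4 : ((a',a,b',b) : Fin (2*m) × Fin (2*m) × Fin (2*m) × Fin (2*m)) ∉
      ({(b,b',a,a'), (b',b,a,a'), (b,b',a',a), (b',b,a',a)} : Finset _) := by
    simp only [mem_insert, mem_singleton, Prod.mk.injEq, not_or, Fin.ext_iff,
      ha, ha', hb, hb']
    omega
  have d5 : ((b,b',a,a') : Fin (2*m) × Fin (2*m) × Fin (2*m) × Fin (2*m)) ∉
      ({(b',b,a,a'), (b,b',a',a), (b',b,a',a)} : Finset _) := by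
    simp only [mem_insert, mem_singleton, Prod.mk.injEq, not_or, Fin.ext_iff,
      ha, ha', hb, hb']
    omega
  have d6 : ((b',b,a,a') : Fin (2*m) × Fin (2*m) × Fin (2*m) × Fin (2*m)) ∉
      ({(b,b',a',a), (b',b,a',a)} : Finset _) := by
    simp only [mem_insert, mem_singleton, Prod.mk.injEq, not_or, Fin.ext_iff,
      ha, ha', hb, hb']
    omega
  have d7 : ((b,b',a',a) : Fin (2*m) × Fin (2*m) × Fin (2*m) × Fin (2*m)) ∉
      ({(b',b,a',a)} : Finset _) := by
    simp only [mem_singleton, Prod.mk.injEq, not_or, Fin.ext_iff, ha, ha', hb, hb']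
    omega
  have hTval : ∑ x ∈ T, F x =
      8 * (((Equiv.Perm.sign σ₀ : ℤ) : ℂ) * (e k : ℂ) * (e l : ℂ)) := by
    show ∑ x ∈ ({(a,a',b,b'), (a',a,b,b'), (a,a',b',b), (a',a,b',b),
      (b,b',a,a'), (b',b,a,a'), (b,b',a',a), (b',b,a',a)} :
        Finset (Fin (2*m) × Fin (2*m) × Fin (2*m) × Fin (2*m))), F x = _
    rw [Finset.sum_insert d1, Finset.sum_insert d2, Finset.sum_insert d3,
      Finset.sum_insert d4, Finset.sum_insert d5, Finset.sum_insert d6,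
      Finset.sum_insert d7, Finset.sum_singleton]
    simp only [F]
    rw [hE1, hE2, hE3, hE4, hE5, hE6, hE7, hE8, hZaa', hZa'a, hZbb', hZb'b]
    ring
  rw [hTval] at hTsub
  have hs0 : ((Equiv.Perm.sign σ₀ : ℤ) : ℂ) ≠ 0 := by
    rcases Int.units_eq_one_or (Equiv.Perm.sign σ₀) with h | h <;> rw [h] <;> norm_num
  have hekc : (e k : ℂ) ≠ 0 := Complex.ofReal_ne_zero.mpr hek
  have helc : (e l : ℂ) ≠ 0 := Complex.ofReal_ne_zero.mpr hel
  have h8 : (8 : ℂ) ≠ 0 := by norm_num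
  exact (mul_ne_zero h8 (mul_ne_zero (mul_ne_zero hs0 hekc) helc)) hTsub
end
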